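/- arXiv:1704.06715 — 3 statements merged into one kernel-verified Lean document; each statement's English description precedes it below -/
import Mathlib

section
/- For a matroid M on [n], the weighted quasisymmetric enumerator of the matroid base polytope coincides with the value of the universal morphism of combinatorial Hopf algebras: F_q(P_M) = Ψ_q([M]). Equivalently, F_q(P_M) = Σ_F q^{rk_{P_M}(F)} M_{type(F)} with coefficient of M_α equal to Σ_{F: type(F)=α} Π_i q^{rk((M|_{F_i})/F_{i−1})}, where rk(N) = (size of ground set of N) − c(N). -/
open scoped Classical Pointwise BigOperators


/-- The dot product pairing on `ℝⁿ`. -/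
def dotp {n : ℕ} (ω x : Fin n → ℝ) : ℝ := ∑ i, ω i * x i

/-- The set of points of `Q` on which the linear functional `⟨ω, ·⟩` attains its maximum. -/
def argmaxSet {n : ℕ} (Q : Set (Fin n → ℝ)) (ω : Fin n → ℝ) : Set (Fin n → ℝ) :=
  {x | x ∈ Q ∧ ∀ y ∈ Q, dotp ω y ≤ dotp ω x}

/-- `G` is a face of `Q` : it is the argmax set of some linear functional. -/
def IsFace {n : ℕ} (Q G : Set (Fin n → ℝ)) : Prop := ∃ ω : Fin n → ℝ, G = argmaxSet Q ω

/-- The dimension of a convex body: the rank of its direction vector space. -/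
noncomputable def pdim {n : ℕ} (s : Set (Fin n → ℝ)) : ℕ := Module.finrank ℝ (vectorSpan ℝ s)

/-- `Q` is a (nonempty) convex polytope. -/
def IsPolytope {n : ℕ} (Q : Set (Fin n → ℝ)) : Prop :=
  ∃ V : Finset (Fin n → ℝ), V.Nonempty ∧ Q = convexHull ℝ (V : Set (Fin n → ℝ))

/-- A flag `∅ ⊂ F₁ ⊂ ⋯ ⊂ F_k ⊂ [n]` of subsets of `[n]`, recorded by its set
`C = {F₁,…,F_k}` of proper nonempty intermediate subsets, which form a chain. -/
def IsFlag (n : ℕ) (C : Finset (Finset (Fin n))) : Prop :=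
  (∀ A ∈ C, A.Nonempty ∧ A ≠ Finset.univ) ∧ (∀ A ∈ C, ∀ B ∈ C, A ⊆ B ∨ B ⊆ A)

/-- The level of an element: the number of members of the chain not containing it.  Elements of
`F_i ∖ F_{i-1}` have level `i - 1`-ish: level `0` on the smallest set, etc. -/
def lv {n : ℕ} (C : Finset (Finset (Fin n))) (p : Fin n) : ℕ := (C.filter (fun A => p ∉ A)).card

/-- The `j`-th member `F_j` of the full chain `∅ = F₀ ⊂ F₁ ⊂ ⋯ ⊂ F_{k+1} = [n]` of the flag. -/
def fullChain {n : ℕ} (C : Finset (Finset (Fin n))) (j : ℕ) : Finset (Fin n) :=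
  Finset.univ.filter (fun p => lv C p < j)

/-- The type of a flag: the composition `(|F₁|-|F₀|, …, |F_{k+1}|-|F_k|)` of `n`. -/
def flagType {n : ℕ} (C : Finset (Finset (Fin n))) : List ℕ :=
  (List.range (C.card + 1)).map (fun j => (fullChain C (j + 1)).card - (fullChain C j).card)

/-- The relative interior of the braid cone of a flag: weight vectors `ω` that are constant on
each block `F_i ∖ F_{i-1}` and satisfy `ω|_{F_{i+1}∖F_i} < ω|_{F_i∖F_{i-1}}` (strictly
decreasing along the flag). -/
def relintBraidCone {n : ℕ} (C : Finset (Finset (Fin n))) : Set (Fin n → ℝ) :=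
  {x | ∀ p q : Fin n, ((∀ A ∈ C, (p ∈ A ↔ q ∈ A)) → x p = x q) ∧
      ((∃ A ∈ C, p ∈ A ∧ q ∉ A) → x q < x p)}

/-- Homogeneous quasisymmetric functions in the monomial basis: finitely supported
coefficient functions on compositions (lists of positive integers). -/
abbrev QS : Type := (List ℕ) →₀ ℚ

/-- The monomial quasisymmetric function `M_α`. -/
noncomputable def Mc (l : List ℕ) : QS := Finsupp.single l 1

/-- The principal specialization at `-1`:  `ps(M_α)(-1) = (-1)^{k(α)}`, extended linearly. -/
noncomputable def psNeg (f : QS) : ℚ := f.sum (fun l c => c * (-1) ^ l.length)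

/-- The `f`-polynomial of a polytope `P ⊆ ℝⁿ`, evaluated at `t`. -/
noncomputable def fPoly {n : ℕ} (P : Set (Fin n → ℝ)) (t : ℚ) : ℚ :=
  ∑ i ∈ Finset.range n, ((Set.ncard {G : Set (Fin n → ℝ) | IsFace P G ∧ pdim G = i} : ℚ) * t ^ i)

/-- The weighted quasisymmetric enumerator `F_q(Q) = Σ_F q^{rk(F)} M_{type(F)}`, where the rank
statistic `rk` on flags is given as an argument. -/
noncomputable def FqEnum (n : ℕ) (rk : Finset (Finset (Fin n)) → ℕ) (q : ℚ) : QS :=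
  ∑ C : Finset (Finset (Fin n)), if IsFlag n C then q ^ (rk C) • Mc (flagType C) else 0

/-- A matroid on `[n]`, given by its nonempty collection of bases satisfying the exchange
property. -/
def IsMatroid (n : ℕ) (𝓑 : Finset (Finset (Fin n))) : Prop :=
  𝓑.Nonempty ∧
    ∀ B₁ ∈ 𝓑, ∀ B₂ ∈ 𝓑, ∀ i ∈ B₁ \ B₂, ∃ j ∈ B₂ \ B₁, insert j (B₁.erase i) ∈ 𝓑

/-- The indicator vector `e_B = Σ_{i ∈ B} e_i` of a subset `B ⊆ [n]`. -/
def indVec {n : ℕ} (B : Finset (Fin n)) : Fin n → ℝ := fun i => if i ∈ B then 1 else 0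

/-- The matroid base polytope `P_M = Conv{e_B : B ∈ 𝓑(M)}`. -/
noncomputable def basePoly {n : ℕ} (𝓑 : Finset (Finset (Fin n))) : Set (Fin n → ℝ) :=
  convexHull ℝ (indVec '' (𝓑 : Set (Finset (Fin n))))

/-- The basis-exchange relation whose equivalence classes are the connected components of the
matroid: `i ~ j` iff there are bases `B₁, B₂` with `i ∈ B₁` and `B₂ = (B₁ ∖ {i}) ∪ {j}`. -/
def mRel {n : ℕ} (𝓑 : Finset (Finset (Fin n))) (i j : Fin n) : Prop :=
  ∃ B₁ ∈ 𝓑, i ∈ B₁ ∧ insert j (B₁.erase i) ∈ 𝓑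

/-- The number of connected components of (the matroid with bases) `𝓑` that meet the ground set
`ground`: the number of equivalence classes of the component relation restricted to `ground`. -/
noncomputable def cOn {n : ℕ} (ground : Finset (Fin n)) (𝓑 : Finset (Finset (Fin n))) : ℕ :=
  Set.ncard (Quot.mk (mRel 𝓑) '' (ground : Set (Fin n)))

/-- A subset is independent if it is contained in a basis. -/
def mIndep {n : ℕ} (𝓑 : Finset (Finset (Fin n))) (I : Finset (Fin n)) : Prop :=
  ∃ B ∈ 𝓑, I ⊆ B

/-- The bases of the restriction `M|_A`: maximal independent subsets of `A`. -/
noncomputable def basesRestrict {n : ℕ} (𝓑 : Finset (Finset (Fin n))) (A : Finset (Fin n)) :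
    Finset (Finset (Fin n)) :=
  A.powerset.filter (fun I => mIndep 𝓑 I ∧ ∀ J ∈ A.powerset, mIndep 𝓑 J → I ⊆ J → I = J)

/-- The bases of the contraction `M/A`: sets `I` disjoint from `A` such that `I ∪ B_A` is a basis
for some basis `B_A` of `M|_A`. -/
noncomputable def basesContract {n : ℕ} (𝓑 : Finset (Finset (Fin n))) (A : Finset (Fin n)) :
    Finset (Finset (Fin n)) :=
  (Finset.univ : Finset (Fin n)).powerset.filter
    (fun I => Disjoint I A ∧ ∃ BA ∈ basesRestrict 𝓑 A, I ∪ BA ∈ 𝓑)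

/-- The bases of the minor `(M|_X)/Y`. -/
noncomputable def minorBases {n : ℕ} (𝓑 : Finset (Finset (Fin n))) (X Y : Finset (Fin n)) :
    Finset (Finset (Fin n)) :=
  basesContract (basesRestrict 𝓑 X) Y

/-- The rank `r(A)` of a subset `A`: the size of a basis of `M|_A`. -/
noncomputable def rankOf {n : ℕ} (𝓑 : Finset (Finset (Fin n))) (A : Finset (Fin n)) : ℕ :=
  (basesRestrict 𝓑 A).sup Finset.card

/-- The bases of the matroid `M/F = M_ω` attached to a flag `F` (for any `ω` in the relative
interior of the braid cone of `F`): the bases of maximum `ω`-weight, i.e. those `B` with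
`|B ∩ F_i| = r(F_i)` for every member `F_i` of the full chain of the flag. -/
noncomputable def flagQuotBases {n : ℕ} (𝓑 : Finset (Finset (Fin n))) (C : Finset (Finset (Fin n))) :
    Finset (Finset (Fin n)) :=
  𝓑.filter (fun B => ∀ j ∈ Finset.range (C.card + 2), (B ∩ fullChain C j).card = rankOf 𝓑 (fullChain C j))

/-- The rank statistic `rk_{P_M}(F) = Σ_j rk((M|_{F_j})/F_{j-1})` of a flag, where
`rk(N) = (size of ground set of N) - c(N)`. -/
noncomputable def rkM {n : ℕ} (𝓑 : Finset (Finset (Fin n))) (C : Finset (Finset (Fin n))) : ℕ :=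
  ∑ j ∈ Finset.range (C.card + 1),
    ((fullChain C (j + 1)).card - (fullChain C j).card -
      cOn ((fullChain C (j + 1)) \ (fullChain C j))
        (minorBases 𝓑 (fullChain C (j + 1)) (fullChain C j)))

/-!
The weight `ω_p = k + 1 - lv(p)` lies in the relative interior of the braid cone of a flag
`F = (F₁ ⊂ ⋯ ⊂ F_k)`, and `⟨ω, e_B⟩ = Σ_j |B ∩ F_j| ≤ Σ_j r(F_j)`. So the face of `P_M` selected
by `F` is the base polytope of the bases attaining `r(F_j)` for every `j`; these are exactly the
sets meeting each `F_{j+1} ∖ F_j` in a basis of the minor `(M|_{F_{j+1}})/F_j`, so the face is the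
product of the base polytopes of these minors.

The base polytope of a matroid on `E` contains the directions `e_p - e_q` for `p, q` in a common
connected component (basis exchange), and every basis meets each component `K` in the same number
of elements, so its direction space is `{x | Σ_{i ∈ K} x_i = 0 for all K}`, of dimension
`|E| - c`. Summing over the blocks of the flag gives `rk_{P_M}(F)`.
-/

open Finset

section MatroidBases

variable {n : ℕ} {𝓑 : Finset (Finset (Fin n))}

theorem mIndep.subset {I J : Finset (Fin n)} (hJ : mIndep 𝓑 J) (hIJ : I ⊆ J) : mIndep 𝓑 I :=
  let ⟨B, hB, hJB⟩ := hJ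
  ⟨B, hB, hIJ.trans hJB⟩

theorem mIndep_of_mem {B : Finset (Fin n)} (hB : B ∈ 𝓑) : mIndep 𝓑 B := ⟨B, hB, subset_rfl⟩

theorem mem_basesRestrict {A I : Finset (Fin n)} :
    I ∈ basesRestrict 𝓑 A ↔ I ⊆ A ∧ mIndep 𝓑 I ∧ ∀ J ⊆ A, mIndep 𝓑 J → I ⊆ J → I = J := by
  simp [basesRestrict]

theorem exists_mem_basesRestrict_superset {A I : Finset (Fin n)} (hI : mIndep 𝓑 I)
    (hIA : I ⊆ A) : ∃ J ∈ basesRestrict 𝓑 A, I ⊆ J := by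
  obtain ⟨J, hJ, hJmax⟩ := (A.powerset.filter (fun J => mIndep 𝓑 J ∧ I ⊆ J)).exists_max_image
    card ⟨I, by simp [hIA, hI]⟩
  simp only [mem_filter, mem_powerset, and_imp] at hJ hJmax
  exact ⟨J, mem_basesRestrict.2 ⟨hJ.1, hJ.2.1, fun J' hJ'A hJ' hJJ' =>
    eq_of_subset_of_card_le hJJ' (hJmax J' hJ'A hJ' (hJ.2.2.trans hJJ'))⟩, hJ.2.2⟩

theorem inter_eq_of_mem_basesRestrict {A I B : Finset (Fin n)} (hB : B ∈ 𝓑)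
    (hI : I ∈ basesRestrict 𝓑 A) (hIB : I ⊆ B) : B ∩ A = I :=
  have hI := mem_basesRestrict.1 hI
  (hI.2.2 _ inter_subset_right ((mIndep_of_mem hB).subset inter_subset_left)
    (subset_inter hIB hI.1)).symm

theorem subset_sdiff_of_mem_minorBases {X Y D : Finset (Fin n)} (hD : D ∈ minorBases 𝓑 Y X) :
    D ⊆ Y \ X := by
  simp only [minorBases, basesContract, mem_filter] at hD
  obtain ⟨-, hDX, J, -, hDJ⟩ := hD
  exact subset_sdiff.2 ⟨subset_union_left.trans (mem_basesRestrict.1 hDJ).1, hDX⟩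

theorem card_filter_insert_erase {α : Type*} [DecidableEq α] {P : α → Prop} [DecidablePred P]
    {B : Finset α} {i j : α} (hi : i ∈ B) (hj : j ∉ B) (hP : P i ↔ P j) :
    #((insert j (B.erase i)).filter P) = #(B.filter P) := by
  by_cases hPi : P i
  · rw [filter_insert, if_pos (hP.1 hPi), filter_erase, card_insert_of_notMem (by simp [hj]),
      card_erase_add_one (mem_filter.2 ⟨hi, hPi⟩)]
  · rw [filter_insert, if_neg (mt hP.2 hPi), filter_erase, erase_eq_of_notMem (by simp [hPi])]

theorem IsMatroid.card_filter_eq (hM : IsMatroid n 𝓑) {P : Fin n → Prop} [DecidablePred P]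
    (hP : ∀ p q, mRel 𝓑 p q → (P p ↔ P q)) {B₁ B₂ : Finset (Fin n)} (h₁ : B₁ ∈ 𝓑)
    (h₂ : B₂ ∈ 𝓑) : #(B₁.filter P) = #(B₂.filter P) := by
  induction hd : #(B₁ \ B₂) using Nat.strong_induction_on generalizing B₁ with
  | _ m ih =>
  rcases (B₁ \ B₂).eq_empty_or_nonempty with h₁₂ | ⟨i, hi⟩
  · have h₂₁ : B₂ \ B₁ = ∅ := by
      by_contra h
      obtain ⟨i, hi⟩ := nonempty_iff_ne_empty.2 h
      obtain ⟨j, hj, -⟩ := hM.2 B₂ h₂ B₁ h₁ i hi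
      simp [h₁₂] at hj
    rw [sdiff_eq_empty_iff_subset] at h₁₂ h₂₁
    rw [Subset.antisymm h₁₂ h₂₁]
  · obtain ⟨j, hj, hB⟩ := hM.2 B₁ h₁ B₂ h₂ i hi
    rw [mem_sdiff] at hi hj
    rw [← card_filter_insert_erase hi.1 hj.2 (hP i j ⟨B₁, h₁, hi.1, hB⟩)]
    refine ih _ ?_ hB rfl
    rw [← hd, insert_sdiff_of_mem _ hj.1, erase_sdiff_comm]
    exact card_erase_lt_of_mem (mem_sdiff.2 hi)

theorem IsMatroid.card_eq (hM : IsMatroid n 𝓑) {B₁ B₂ : Finset (Fin n)} (h₁ : B₁ ∈ 𝓑)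
    (h₂ : B₂ ∈ 𝓑) : #B₁ = #B₂ := by
  simpa using hM.card_filter_eq (P := fun _ => True) (by simp) h₁ h₂

theorem IsMatroid.exists_mem_subset_union (hM : IsMatroid n 𝓑) {B J : Finset (Fin n)}
    (hB : B ∈ 𝓑) (hJ : mIndep 𝓑 J) : ∃ B' ∈ 𝓑, J ⊆ B' ∧ B' ⊆ B ∪ J := by
  obtain ⟨B', hB', hmin⟩ := (𝓑.filter (J ⊆ ·)).exists_min_image (fun B' => #(B' \ (B ∪ J)))
    (let ⟨B₀, h₀, hJ₀⟩ := hJ; ⟨B₀, mem_filter.2 ⟨h₀, hJ₀⟩⟩)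
  rw [mem_filter] at hB'
  refine ⟨B', hB'.1, hB'.2, fun i hi => by_contra fun hiBJ => ?_⟩
  rw [mem_union, not_or] at hiBJ
  obtain ⟨j, hj, hB''⟩ := hM.2 B' hB'.1 B hB i (mem_sdiff.2 ⟨hi, hiBJ.1⟩)
  have hJ'' : J ⊆ insert j (B'.erase i) := fun x hx =>
    mem_insert_of_mem (mem_erase.2 ⟨by rintro rfl; exact hiBJ.2 hx, hB'.2 hx⟩)
  have hle := hmin _ (mem_filter.2 ⟨hB'', hJ''⟩)
  rw [insert_sdiff_of_mem _ (mem_union_left _ (mem_sdiff.1 hj).1), erase_sdiff_comm] at hle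
  exact (card_erase_lt_of_mem (mem_sdiff.2 ⟨hi, by simp [hiBJ.1, hiBJ.2]⟩)).not_ge hle

theorem IsMatroid.card_le_of_mem_basesRestrict (hM : IsMatroid n 𝓑) {A I J : Finset (Fin n)}
    (hI : I ∈ basesRestrict 𝓑 A) (hJ : J ∈ basesRestrict 𝓑 A) : #J ≤ #I := by
  obtain ⟨BJ, hBJ, hJBJ⟩ := (mem_basesRestrict.1 hJ).2.1
  obtain ⟨B, hB, hIB, hBsub⟩ := hM.exists_mem_subset_union hBJ (mem_basesRestrict.1 hI).2.1
  have hIA := (mem_basesRestrict.1 hI).1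
  have hsd : B \ A ⊆ BJ \ A := fun x hx => by grind
  have hcard := hM.card_eq hB hBJ
  rw [← card_sdiff_add_card_inter B A, ← card_sdiff_add_card_inter BJ A,
    inter_eq_of_mem_basesRestrict hB hI hIB, inter_eq_of_mem_basesRestrict hBJ hJ hJBJ] at hcard
  have := card_le_card hsd
  omega

theorem IsMatroid.card_eq_rankOf (hM : IsMatroid n 𝓑) {A I : Finset (Fin n)}
    (hI : I ∈ basesRestrict 𝓑 A) : #I = rankOf 𝓑 A :=
  le_antisymm (le_sup hI) (Finset.sup_le fun _ hJ => hM.card_le_of_mem_basesRestrict hI hJ)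

theorem IsMatroid.card_le_rankOf (hM : IsMatroid n 𝓑) {A I : Finset (Fin n)} (hI : mIndep 𝓑 I)
    (hIA : I ⊆ A) : #I ≤ rankOf 𝓑 A := by
  obtain ⟨J, hJ, hIJ⟩ := exists_mem_basesRestrict_superset hI hIA
  exact (card_le_card hIJ).trans (hM.card_eq_rankOf hJ).le

theorem IsMatroid.mem_basesRestrict_iff_card (hM : IsMatroid n 𝓑) {A I : Finset (Fin n)}
    (hI : mIndep 𝓑 I) (hIA : I ⊆ A) : I ∈ basesRestrict 𝓑 A ↔ #I = rankOf 𝓑 A := by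
  refine ⟨hM.card_eq_rankOf, fun h => ?_⟩
  obtain ⟨J, hJ, hIJ⟩ := exists_mem_basesRestrict_superset hI hIA
  rwa [eq_of_subset_of_card_le hIJ (h ▸ (hM.card_eq_rankOf hJ).le)]

theorem IsMatroid.basesRestrict_nonempty (hM : IsMatroid n 𝓑) (A : Finset (Fin n)) :
    (basesRestrict 𝓑 A).Nonempty :=
  let ⟨B, hB⟩ := hM.1
  let ⟨J, hJ, _⟩ := exists_mem_basesRestrict_superset ⟨B, hB, empty_subset B⟩ (empty_subset A)
  ⟨J, hJ⟩

theorem IsMatroid.basesRestrict_univ (hM : IsMatroid n 𝓑) : basesRestrict 𝓑 univ = 𝓑 := by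
  ext I
  refine ⟨fun hI => ?_, fun hI => ?_⟩
  · obtain ⟨B, hB, hIB⟩ := (mem_basesRestrict.1 hI).2.1
    rwa [← inter_eq_of_mem_basesRestrict hB hI hIB, inter_univ]
  · obtain ⟨J, hJ, hIJ⟩ := exists_mem_basesRestrict_superset (mIndep_of_mem hI) (subset_univ I)
    obtain ⟨B, hB, hJB⟩ := (mem_basesRestrict.1 hJ).2.1
    have hIB : I = B := eq_of_subset_of_card_le (hIJ.trans hJB) (hM.card_eq hB hI).le
    have hJB' : J = B := by rw [← inter_eq_of_mem_basesRestrict hB hJ hJB, inter_univ]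
    rwa [hIB, ← hJB']

theorem IsMatroid.exists_insert_mIndep (hM : IsMatroid n 𝓑) {I J : Finset (Fin n)}
    (hI : mIndep 𝓑 I) (hJ : mIndep 𝓑 J) (hlt : #I < #J) :
    ∃ x ∈ J, x ∉ I ∧ mIndep 𝓑 (insert x I) := by
  obtain ⟨I', hI', hII'⟩ := exists_mem_basesRestrict_superset (A := I ∪ J) hI subset_union_left
  obtain ⟨J', hJ', hJJ'⟩ := exists_mem_basesRestrict_superset (A := I ∪ J) hJ subset_union_right
  have hne : I ≠ I' := by
    rintro rfl
    exact ((hlt.trans_le (card_le_card hJJ')).trans_le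
      (hM.card_le_of_mem_basesRestrict hI' hJ')).false
  obtain ⟨x, hxI', hxI⟩ := exists_of_ssubset (hII'.ssubset_of_ne hne)
  have hxJ := (mem_union.1 ((mem_basesRestrict.1 hI').1 hxI')).resolve_left hxI
  exact ⟨x, hxJ, hxI, (mem_basesRestrict.1 hI').2.1.subset (insert_subset hxI' hII')⟩

end MatroidBases

section Minors

variable {n : ℕ} {𝓑 : Finset (Finset (Fin n))}

theorem IsMatroid.restrict (hM : IsMatroid n 𝓑) (A : Finset (Fin n)) :
    IsMatroid n (basesRestrict 𝓑 A) := by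
  refine ⟨hM.basesRestrict_nonempty A, fun B₁ h₁ B₂ h₂ i hi => ?_⟩
  rw [mem_sdiff] at hi
  have hB₁ := mem_basesRestrict.1 h₁
  have hB₂ := mem_basesRestrict.1 h₂
  have hlt : #(B₁.erase i) < #B₂ :=
    (hM.card_eq_rankOf h₁).trans (hM.card_eq_rankOf h₂).symm ▸ card_erase_lt_of_mem hi.1
  obtain ⟨x, hxB₂, hx, hxI⟩ := hM.exists_insert_mIndep (hB₁.2.1.subset (erase_subset i B₁))
    hB₂.2.1 hlt
  have hxB₁ : x ∉ B₁ := fun h => hx (mem_erase.2 ⟨by rintro rfl; exact hi.2 hxB₂, h⟩)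
  refine ⟨x, mem_sdiff.2 ⟨hxB₂, hxB₁⟩, (hM.mem_basesRestrict_iff_card hxI
    (insert_subset (hB₂.1 hxB₂) ((erase_subset _ _).trans hB₁.1))).2 ?_⟩
  rw [card_insert_of_notMem hx, card_erase_add_one hi.1, hM.card_eq_rankOf h₁]

theorem basesRestrict_basesRestrict {A A' : Finset (Fin n)} (h : A' ⊆ A) :
    basesRestrict (basesRestrict 𝓑 A) A' = basesRestrict 𝓑 A' := by
  have hind : ∀ I ⊆ A', mIndep (basesRestrict 𝓑 A) I ↔ mIndep 𝓑 I := fun I hI =>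
    ⟨fun ⟨J, hJ, hIJ⟩ => (mem_basesRestrict.1 hJ).2.1.subset hIJ,
      fun hI' => exists_mem_basesRestrict_superset hI' (hI.trans h)⟩
  ext I
  simp only [mem_basesRestrict]
  refine ⟨fun ⟨hIA, hI, hmax⟩ => ⟨hIA, (hind I hIA).1 hI, fun J hJ hJI => ?_⟩,
    fun ⟨hIA, hI, hmax⟩ => ⟨hIA, (hind I hIA).2 hI, fun J hJ hJI => ?_⟩⟩
  · exact hmax J hJ ((hind J hJ).2 hJI)
  · exact hmax J hJ ((hind J hJ).1 hJI)

theorem IsMatroid.mem_basesContract_iff (hM : IsMatroid n 𝓑) {X I J : Finset (Fin n)}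
    (hJ : J ∈ basesRestrict 𝓑 X) : I ∈ basesContract 𝓑 X ↔ Disjoint I X ∧ I ∪ J ∈ 𝓑 := by
  simp only [basesContract, mem_filter, mem_powerset, subset_univ, true_and]
  refine and_congr_right fun hIX => ⟨fun ⟨J', hJ', hIJ'⟩ => ?_, fun h => ⟨J, hJ, h⟩⟩
  have hJX := (mem_basesRestrict.1 hJ).1
  have hJ'X := (mem_basesRestrict.1 hJ').1
  obtain ⟨B, hB, hJB, hBsub⟩ := hM.exists_mem_subset_union hIJ' (mem_basesRestrict.1 hJ).2.1
  have hBX := inter_eq_of_mem_basesRestrict hB hJ hJB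
  have hsd : B \ X ⊆ I := fun x hx => by grind
  have hcard : #B = #I + #J := by
    rw [hM.card_eq hB hIJ', card_union_of_disjoint (hIX.mono_right hJ'X),
      hM.card_eq_rankOf hJ', hM.card_eq_rankOf hJ]
  rw [← card_sdiff_add_card_inter B X, hBX] at hcard
  rw [← eq_of_subset_of_card_le hsd (by omega), ← hBX, sdiff_union_inter]
  exact hB

theorem IsMatroid.contract (hM : IsMatroid n 𝓑) (X : Finset (Fin n)) :
    IsMatroid n (basesContract 𝓑 X) := by
  obtain ⟨J, hJ⟩ := hM.basesRestrict_nonempty X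
  have hJX := (mem_basesRestrict.1 hJ).1
  refine ⟨?_, fun I₁ h₁ I₂ h₂ i hi => ?_⟩
  · obtain ⟨B, hB, hJB⟩ := (mem_basesRestrict.1 hJ).2.1
    refine ⟨B \ X, (hM.mem_basesContract_iff hJ).2 ⟨sdiff_disjoint, ?_⟩⟩
    rwa [← inter_eq_of_mem_basesRestrict hB hJ hJB, sdiff_union_inter]
  · rw [hM.mem_basesContract_iff hJ] at h₁ h₂
    have hiJ : i ∉ J := fun h => disjoint_left.1 h₁.1 (mem_sdiff.1 hi).1 (hJX h)
    obtain ⟨j, hj, hB⟩ := hM.2 _ h₁.2 _ h₂.2 i (by grind)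
    have hjI₂ : j ∈ I₂ := by grind
    refine ⟨j, by grind, (hM.mem_basesContract_iff hJ).2 ⟨?_, ?_⟩⟩
    · exact disjoint_insert_left.2 ⟨disjoint_left.1 h₂.1 hjI₂, h₁.1.mono_left (erase_subset _ _)⟩
    · rwa [erase_union_distrib, erase_eq_of_notMem hiJ, ← insert_union] at hB

theorem IsMatroid.minor (hM : IsMatroid n 𝓑) (Y X : Finset (Fin n)) :
    IsMatroid n (minorBases 𝓑 Y X) :=
  (hM.restrict Y).contract X

theorem IsMatroid.inter_mem_basesRestrict_iff (hM : IsMatroid n 𝓑) {X Y B : Finset (Fin n)}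
    (hXY : X ⊆ Y) (hX : B ∩ X ∈ basesRestrict 𝓑 X) :
    B ∩ Y ∈ basesRestrict 𝓑 Y ↔ B ∩ (Y \ X) ∈ minorBases 𝓑 Y X := by
  rw [minorBases, (hM.restrict Y).mem_basesContract_iff (J := B ∩ X)
    (by rwa [basesRestrict_basesRestrict hXY]), ← inter_union_distrib_left,
    sdiff_union_of_subset hXY]
  exact (and_iff_right (sdiff_disjoint.mono_left inter_subset_right)).symm

theorem IsMatroid.forall_inter_mem_basesRestrict_iff (hM : IsMatroid n 𝓑)
    {F : ℕ → Finset (Fin n)} (hF : Monotone F) (h0 : F 0 = ∅) (B : Finset (Fin n)) (N : ℕ) :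
    (∀ j ≤ N, B ∩ F j ∈ basesRestrict 𝓑 (F j)) ↔
      ∀ j < N, B ∩ (F (j + 1) \ F j) ∈ minorBases 𝓑 (F (j + 1)) (F j) := by
  induction N with
  | zero =>
    obtain ⟨J, hJ⟩ := hM.basesRestrict_nonempty ∅
    rw [subset_empty.1 (mem_basesRestrict.1 hJ).1] at hJ
    simpa [h0] using hJ
  | succ N ih =>
    rw [Nat.forall_lt_succ_right, ← ih]
    refine ⟨fun h => ⟨fun j hj => h j (by omega), ?_⟩, fun ⟨h, hN⟩ j hj => ?_⟩
    · exact (hM.inter_mem_basesRestrict_iff (hF N.le_succ) (h N (by omega))).1 (h _ le_rfl)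
    · rcases hj.lt_or_eq with hj | rfl
      · exact h j (by omega)
      · exact (hM.inter_mem_basesRestrict_iff (hF N.le_succ) (h N le_rfl)).2 hN

end Minors

section Flags

variable {n : ℕ} {𝓑 C : Finset (Finset (Fin n))}

theorem lv_le_card (C : Finset (Finset (Fin n))) (p : Fin n) : lv C p ≤ C.card :=
  card_le_card (filter_subset _ _)

theorem lv_eq_of_forall_mem_iff {p q : Fin n} (h : ∀ A ∈ C, (p ∈ A ↔ q ∈ A)) :
    lv C p = lv C q := by
  unfold lv
  congr 1
  exact filter_congr fun A hA => by rw [h A hA]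

theorem IsFlag.lv_lt {p q : Fin n} {A : Finset (Fin n)} (hC : IsFlag n C) (hA : A ∈ C)
    (hpA : p ∈ A) (hqA : q ∉ A) : lv C p < lv C q := by
  refine card_lt_card ⟨fun A' hA' => ?_, fun h => (mem_filter.1 (h (mem_filter.2 ⟨hA, hqA⟩))).2 hpA⟩
  simp only [mem_filter] at hA' ⊢
  refine ⟨hA'.1, fun hqA' => hA'.2 ?_⟩
  exact (hC.2 A hA A' hA'.1).elim (· hpA) fun h => absurd (h hqA') hqA

theorem mem_fullChain {p : Fin n} {j : ℕ} : p ∈ fullChain C j ↔ lv C p < j := by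
  simp [fullChain]

theorem fullChain_zero (C : Finset (Finset (Fin n))) : fullChain C 0 = ∅ := by
  ext p
  simp [mem_fullChain]

theorem fullChain_of_card_lt {j : ℕ} (hj : C.card < j) : fullChain C j = univ := by
  ext p
  simpa [mem_fullChain] using (lv_le_card C p).trans_lt hj

theorem fullChain_mono (C : Finset (Finset (Fin n))) : Monotone (fullChain C) :=
  fun _ _ hjk _ hp => mem_fullChain.2 ((mem_fullChain.1 hp).trans_le hjk)

def flagBlock (C : Finset (Finset (Fin n))) (j : ℕ) : Finset (Fin n) :=
  fullChain C (j + 1) \ fullChain C j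

noncomputable def flagMinor (𝓑 C : Finset (Finset (Fin n))) (j : ℕ) : Finset (Finset (Fin n)) :=
  minorBases 𝓑 (fullChain C (j + 1)) (fullChain C j)

theorem mem_flagBlock {p : Fin n} {j : ℕ} : p ∈ flagBlock C j ↔ lv C p = j := by
  simp only [flagBlock, mem_sdiff, mem_fullChain]
  omega

theorem subset_flagBlock_of_mem_flagMinor {j : ℕ} {D : Finset (Fin n)}
    (hD : D ∈ flagMinor 𝓑 C j) : D ⊆ flagBlock C j :=
  subset_sdiff_of_mem_minorBases hD

theorem flagQuotBases_subset : flagQuotBases 𝓑 C ⊆ 𝓑 := fun _ hB => by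
  simp only [flagQuotBases, mem_filter] at hB
  exact hB.1

theorem mem_flagQuotBases_iff (hM : IsMatroid n 𝓑) {B : Finset (Fin n)} :
    B ∈ flagQuotBases 𝓑 C ↔ ∀ j ≤ C.card, B ∩ flagBlock C j ∈ flagMinor 𝓑 C j := by
  refine Iff.trans ?_ ((hM.forall_inter_mem_basesRestrict_iff (fullChain_mono C)
    (fullChain_zero C) B (C.card + 1)).trans (by simp only [Nat.lt_succ_iff]; rfl))
  simp only [flagQuotBases, mem_filter, mem_range]
  refine ⟨fun ⟨hB, hcard⟩ j hj => ?_, fun h => ?_⟩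
  · exact (hM.mem_basesRestrict_iff_card ((mIndep_of_mem hB).subset inter_subset_left)
      inter_subset_right).2 (hcard j (by omega))
  · have hB := h (C.card + 1) le_rfl
    rw [fullChain_of_card_lt (Nat.lt_succ_self _), inter_univ, hM.basesRestrict_univ] at hB
    exact ⟨hB, fun j hj => hM.card_eq_rankOf (h j (by omega))⟩

theorem flagQuotBases_nonempty (hM : IsMatroid n 𝓑) (C : Finset (Finset (Fin n))) :
    (flagQuotBases 𝓑 C).Nonempty := by
  choose D hD using fun j => (hM.minor (fullChain C (j + 1)) (fullChain C j)).1
  refine ⟨univ.filter fun p => p ∈ D (lv C p), (mem_flagQuotBases_iff hM).2 fun j _ => ?_⟩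
  suffices h : (univ.filter fun p => p ∈ D (lv C p)) ∩ flagBlock C j = D j from h ▸ hD j
  ext p
  have : p ∈ D j → lv C p = j := fun h =>
    mem_flagBlock.1 (subset_flagBlock_of_mem_flagMinor (hD j) h)
  simp only [mem_inter, mem_filter, mem_univ, true_and, mem_flagBlock]
  grind

theorem sdiff_union_mem_flagQuotBases (hM : IsMatroid n 𝓑) {B D : Finset (Fin n)} {j : ℕ}
    (hB : B ∈ flagQuotBases 𝓑 C) (hD : D ∈ flagMinor 𝓑 C j) :
    B \ flagBlock C j ∪ D ∈ flagQuotBases 𝓑 C := by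
  rw [mem_flagQuotBases_iff hM] at hB ⊢
  intro i hi
  have hDj := subset_flagBlock_of_mem_flagMinor hD
  rcases eq_or_ne i j with rfl | hij
  · convert hD using 1
    rw [union_inter_distrib_right, sdiff_inter_self, empty_union, inter_eq_left.2 hDj]
  · convert hB i hi using 1
    ext p
    have : p ∈ D → lv C p = j := fun h => mem_flagBlock.1 (hDj h)
    simp only [mem_inter, mem_union, mem_sdiff, mem_flagBlock]
    grind

end Flags

section Faces

variable {n : ℕ}

theorem isLinearMap_dotp (ω : Fin n → ℝ) : IsLinearMap ℝ (dotp ω) :=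
  ⟨fun x y => by simp [dotp, mul_add, sum_add_distrib],
    fun c x => by simp [dotp, mul_sum, mul_left_comm]⟩

theorem dotp_indVec (ω : Fin n → ℝ) (B : Finset (Fin n)) : dotp ω (indVec B) = ∑ p ∈ B, ω p := by
  simp [dotp, indVec]

theorem argmaxSet_convexHull {V : Set (Fin n → ℝ)} {ω : Fin n → ℝ} {m : ℝ}
    (hle : ∀ v ∈ V, dotp ω v ≤ m) (hm : ∃ v ∈ V, dotp ω v = m) :
    argmaxSet (convexHull ℝ V) ω = convexHull ℝ {v ∈ V | dotp ω v = m} := by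
  have hlin := isLinearMap_dotp ω
  have hhull : convexHull ℝ V ⊆ {x | dotp ω x ≤ m} :=
    convexHull_min hle (convex_halfSpace_le hlin m)
  have hface : convexHull ℝ {v ∈ V | dotp ω v = m} ⊆ {x | dotp ω x = m} :=
    convexHull_min (fun _ hv => hv.2) (convex_hyperplane hlin m)
  obtain ⟨v₀, hv₀, hv₀m⟩ := hm
  ext x
  refine ⟨fun ⟨hx, hxmax⟩ => ?_, fun hx => ⟨convexHull_mono (fun _ hv => hv.1) hx,
    fun y hy => (hhull hy).trans (hface hx).ge⟩⟩
  have hxm : dotp ω x = m :=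
    le_antisymm (hhull hx) (hv₀m ▸ hxmax v₀ (subset_convexHull ℝ V hv₀))
  rw [_root_.convexHull_eq, Set.mem_ofPred] at hx
  obtain ⟨ι, t, w, z, hw₀, hw₁, hz, rfl⟩ := hx
  have hdotp : dotp ω (t.centerMass w z) = ∑ i ∈ t, w i * dotp ω (z i) := by
    rw [centerMass_eq_of_sum_1 _ _ hw₁]
    exact map_sum (hlin.mk' _) _ _ |>.trans (sum_congr rfl fun i _ => map_smul (hlin.mk' _) _ _)
  -- the defect `m - ⟨ω, x⟩` is a nonnegative combination of the defects of the `z i`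
  have hdefect : ∑ i ∈ t, w i * (m - dotp ω (z i)) = 0 := by
    simp only [mul_sub, sum_sub_distrib, ← sum_mul, hw₁, one_mul, ← hdotp, hxm, sub_self]
  have hzero := (sum_eq_zero_iff_of_nonneg fun i hi =>
    mul_nonneg (hw₀ i hi) (sub_nonneg.2 (hle _ (hz i hi)))).1 hdefect
  rw [← centerMass_filter_ne_zero]
  refine centerMass_mem_convexHull _ (fun i hi => hw₀ i (mem_filter.1 hi).1)
    (by rw [sum_filter_ne_zero, hw₁]; exact one_pos) fun i hi => ⟨hz i (mem_filter.1 hi).1, ?_⟩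
  have := (mul_eq_zero.1 (hzero i (mem_filter.1 hi).1)).resolve_left (mem_filter.1 hi).2
  linarith

end Faces

section BasePolytope

variable {n : ℕ} {𝓑 : Finset (Finset (Fin n))}

def flagWeight (C : Finset (Finset (Fin n))) (p : Fin n) : ℝ := (C.card + 1 - lv C p : ℕ)

theorem flagWeight_mem_relintBraidCone {C : Finset (Finset (Fin n))} (hC : IsFlag n C) :
    flagWeight C ∈ relintBraidCone C := by
  refine fun p q => ⟨fun h => by rw [flagWeight, flagWeight, lv_eq_of_forall_mem_iff h],
    fun ⟨A, hA, hpA, hqA⟩ => ?_⟩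
  have := hC.lv_lt hA hpA hqA
  have := lv_le_card C q
  exact Nat.cast_lt.2 (by omega)

theorem sum_card_inter_fullChain (C : Finset (Finset (Fin n))) (B : Finset (Fin n)) :
    ∑ j ∈ range (C.card + 2), #(B ∩ fullChain C j) = ∑ p ∈ B, (C.card + 1 - lv C p) := by
  simp only [fullChain, inter_filter, inter_univ, card_filter]
  rw [sum_comm]
  refine sum_congr rfl fun p _ => ?_
  have := lv_le_card C p
  have hIoo : (range (C.card + 2)).filter (lv C p < ·) = Ioo (lv C p) (C.card + 2) := by
    ext j
    simp only [mem_filter, mem_range, mem_Ioo]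
    omega
  rw [← card_filter, hIoo, Nat.card_Ioo]
  omega

theorem dotp_flagWeight_indVec (C : Finset (Finset (Fin n))) (B : Finset (Fin n)) :
    dotp (flagWeight C) (indVec B) = ∑ j ∈ range (C.card + 2), #(B ∩ fullChain C j) := by
  rw [dotp_indVec, sum_card_inter_fullChain]
  push_cast [flagWeight]
  rfl

theorem argmaxSet_basePoly_flagWeight (hM : IsMatroid n 𝓑) (C : Finset (Finset (Fin n))) :
    argmaxSet (basePoly 𝓑) (flagWeight C) = convexHull ℝ (indVec '' ↑(flagQuotBases 𝓑 C)) := by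
  set m := ∑ j ∈ range (C.card + 2), rankOf 𝓑 (fullChain C j)
  have hle : ∀ B ∈ 𝓑, ∀ j, #(B ∩ fullChain C j) ≤ rankOf 𝓑 (fullChain C j) := fun B hB _ =>
    hM.card_le_rankOf ((mIndep_of_mem hB).subset inter_subset_left) inter_subset_right
  have hmax : ∀ B ∈ 𝓑, (dotp (flagWeight C) (indVec B) = m ↔ B ∈ flagQuotBases 𝓑 C) := by
    intro B hB
    rw [dotp_flagWeight_indVec, Nat.cast_inj, sum_eq_sum_iff_of_le fun j _ => hle B hB j]
    simp [flagQuotBases, hB]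
  rw [basePoly, argmaxSet_convexHull (m := m)]
  · congr 1
    ext v
    simp only [Set.mem_ofPred, Set.mem_image, mem_coe]
    refine ⟨fun ⟨⟨B, hB, hBv⟩, h⟩ => ⟨B, (hmax B hB).1 (hBv ▸ h), hBv⟩,
      fun ⟨B, hB, hBv⟩ => ?_⟩
    have hB' := flagQuotBases_subset hB
    exact ⟨⟨B, hB', hBv⟩, hBv ▸ (hmax B hB').2 hB⟩
  · rintro _ ⟨B, hB, rfl⟩
    rw [dotp_flagWeight_indVec]
    exact_mod_cast sum_le_sum fun j _ => hle B hB j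
  · obtain ⟨B, hB⟩ := flagQuotBases_nonempty hM C
    exact ⟨indVec B, ⟨B, flagQuotBases_subset hB, rfl⟩, (hmax B (flagQuotBases_subset hB)).2 hB⟩

end BasePolytope

section VectorSpan

variable {n : ℕ}

theorem sum_indVec_filter {ι : Type*} [DecidableEq ι] (B : Finset (Fin n)) (f : Fin n → ι)
    (t : ι) :
    ∑ i ∈ univ.filter (f · = t), indVec B i = #(B.filter (f · = t)) := by
  simp only [indVec, sum_boole, filter_filter]
  congr 2
  ext i
  simp [and_comm]

theorem indVec_union {S D : Finset (Fin n)} (h : Disjoint S D) :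
    indVec (S ∪ D) = indVec S + indVec D := by
  ext i
  by_cases hS : i ∈ S
  · simp [indVec, hS, disjoint_left.1 h hS]
  · simp [indVec, hS]

theorem finrank_vectorSpan_indVec {ι : Type*} [DecidableEq ι] {𝓕 : Finset (Finset (Fin n))}
    (f : Fin n → ι)
    (hcard : ∀ B ∈ 𝓕, ∀ B' ∈ 𝓕, ∀ p, #(B.filter (f · = f p)) = #(B'.filter (f · = f p)))
    (hspan : ∀ p q, f p = f q →
      Pi.single p (1 : ℝ) - Pi.single q 1 ∈ vectorSpan ℝ (indVec '' (𝓕 : Set (Finset (Fin n))))) :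
    Module.finrank ℝ (vectorSpan ℝ (indVec '' (𝓕 : Set (Finset (Fin n))))) =
      n - #(univ.image f) := by
  set T := univ.image f
  let L : (Fin n → ℝ) →ₗ[ℝ] (T → ℝ) :=
    LinearMap.pi fun t => ∑ i ∈ univ.filter (f · = t), LinearMap.proj i
  have hL : ∀ x t, L x t = ∑ i ∈ univ.filter (f · = ↑t), x i := by simp [L]
  choose s hs using fun t : T => mem_image.1 t.2
  have hsurj : Function.Surjective L := fun g => ⟨∑ t, g t • Pi.single (s t) 1, by
    ext t
    simp only [hL, Finset.sum_apply, Pi.smul_apply, Pi.single_apply, smul_eq_mul, mul_ite,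
      mul_one, mul_zero]
    rw [sum_comm]
    simp [(hs _).2]⟩
  have hker : vectorSpan ℝ (indVec '' (𝓕 : Set (Finset (Fin n)))) = LinearMap.ker L := by
    refine le_antisymm ?_ fun x hx => ?_
    · rw [vectorSpan_def, Submodule.span_le]
      rintro _ ⟨_, ⟨B, hB, rfl⟩, _, ⟨B', hB', rfl⟩, rfl⟩
      ext t
      obtain ⟨p, -, hp⟩ := mem_image.1 t.2
      simp [hL, sum_sub_distrib, sum_indVec_filter, ← hp, hcard B hB B' hB' p]
    · let r : Fin n → Fin n := fun p => s ⟨f p, mem_image_of_mem f (mem_univ p)⟩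
      have hr : ∀ p, f p = f (r p) := fun p => (hs ⟨f p, mem_image_of_mem f (mem_univ p)⟩).2.symm
      have h0 : ∑ p, x p • Pi.single (r p) (1 : ℝ) = 0 := by
        rw [← sum_fiberwise_of_maps_to (g := f) (t := T) fun p _ => mem_image_of_mem f (mem_univ p)]
        refine sum_eq_zero fun y hy => ?_
        have hry : ∀ i ∈ univ.filter (f · = y),
            x i • Pi.single (r i) (1 : ℝ) = x i • Pi.single (s ⟨y, hy⟩) 1 := fun i hi => by
          rw [show r i = s ⟨y, hy⟩ from congrArg s (Subtype.ext (mem_filter.1 hi).2)]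
        rw [sum_congr rfl hry, ← sum_smul, ← hL x ⟨y, hy⟩, LinearMap.mem_ker.1 hx, Pi.zero_apply,
          zero_smul]
      have hx' : x = ∑ p, x p • (Pi.single p 1 - Pi.single (r p) 1) := by
        simp only [smul_sub, sum_sub_distrib, h0, sub_zero]
        ext i
        simp [Pi.single_apply]
      rw [hx']
      exact Submodule.sum_mem _ fun p _ => Submodule.smul_mem _ _ (hspan p (r p) (hr p))
  have := L.finrank_range_add_finrank_ker
  rw [LinearMap.range_eq_top.2 hsurj, finrank_top, Module.finrank_fintype_fun_eq_card,
    Fintype.card_coe, Module.finrank_fin_fun] at this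
  rw [hker]
  omega

theorem IsMatroid.single_sub_single_mem_vectorSpan {𝓑 : Finset (Finset (Fin n))}
    (hM : IsMatroid n 𝓑) {x y : Fin n} (h : Relation.EqvGen (mRel 𝓑) x y) :
    Pi.single x (1 : ℝ) - Pi.single y 1 ∈ vectorSpan ℝ (indVec '' ↑𝓑) := by
  induction h with
  | rel x y hxy =>
    obtain ⟨B, hB, hx, hB'⟩ := hxy
    rcases eq_or_ne x y with rfl | hne
    · simp
    have hy : y ∉ B := fun hy => by
      have := hM.card_eq hB' hB
      rw [insert_eq_of_mem (mem_erase.2 ⟨hne.symm, hy⟩), card_erase_of_mem hx] at this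
      have := card_pos.2 ⟨x, hx⟩
      omega
    have hdiff : indVec B - indVec (insert y (B.erase x)) = Pi.single x 1 - Pi.single y 1 := by
      ext i
      simp only [indVec, Pi.sub_apply, Pi.single_apply, mem_insert, mem_erase]
      grind
    rw [← hdiff]
    exact vsub_mem_vectorSpan ℝ (Set.mem_image_of_mem _ hB) (Set.mem_image_of_mem _ hB')
  | refl => simp
  | symm _ _ _ ih => simpa using neg_mem ih
  | trans _ _ _ _ _ ih₁ ih₂ => simpa using add_mem ih₁ ih₂

end VectorSpan

section FlagQuotient

variable {n : ℕ} {𝓑 C : Finset (Finset (Fin n))}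

theorem sigma_mk_apply_eq_iff {α κ : Type*} {Q : κ → Type*} (g : ∀ j, α → Q j) {i j : κ}
    {a b : α} : (⟨i, g i a⟩ : Σ j, Q j) = ⟨j, g j b⟩ ↔ i = j ∧ g i a = g i b := by
  constructor
  · intro h
    obtain ⟨rfl, h⟩ := Sigma.mk.inj_iff.1 h
    exact ⟨rfl, eq_of_heq h⟩
  · rintro ⟨rfl, h⟩
    rw [h]

/-- The connected component of `p` in the minor of the flag along whose block `p` lies. -/
noncomputable def flagClass (𝓑 C : Finset (Finset (Fin n))) (p : Fin n) :
    Σ j : ℕ, Quot (mRel (flagMinor 𝓑 C j)) :=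
  ⟨lv C p, Quot.mk _ p⟩

theorem flagClass_eq_iff {p q : Fin n} :
    flagClass 𝓑 C p = flagClass 𝓑 C q ↔
      lv C p = lv C q ∧ Quot.mk (mRel (flagMinor 𝓑 C (lv C p))) p = Quot.mk _ q :=
  sigma_mk_apply_eq_iff fun j => Quot.mk (mRel (flagMinor 𝓑 C j))

theorem flagClass_eq_of_mRel {j : ℕ} {a b : Fin n} (h : mRel (flagMinor 𝓑 C j) a b) :
    flagClass 𝓑 C a = flagClass 𝓑 C b := by
  obtain ⟨D, hD, ha, hD'⟩ := h
  have hlva := mem_flagBlock.1 (subset_flagBlock_of_mem_flagMinor hD ha)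
  have hlvb := mem_flagBlock.1 (subset_flagBlock_of_mem_flagMinor hD' (mem_insert_self b _))
  subst hlva
  exact flagClass_eq_iff.2 ⟨hlvb.symm, Quot.sound ⟨D, hD, ha, hD'⟩⟩

theorem card_filter_flagClass_eq (hM : IsMatroid n 𝓑) {B B' : Finset (Fin n)}
    (hB : B ∈ flagQuotBases 𝓑 C) (hB' : B' ∈ flagQuotBases 𝓑 C) (p : Fin n) :
    #(B.filter (flagClass 𝓑 C · = flagClass 𝓑 C p)) =
      #(B'.filter (flagClass 𝓑 C · = flagClass 𝓑 C p)) := by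
  have hblock : ∀ B : Finset (Fin n), B.filter (flagClass 𝓑 C · = flagClass 𝓑 C p) =
      (B ∩ flagBlock C (lv C p)).filter (flagClass 𝓑 C · = flagClass 𝓑 C p) := fun B => by
    ext i
    simp only [mem_filter, mem_inter, mem_flagBlock]
    exact ⟨fun h => ⟨⟨h.1, (flagClass_eq_iff.1 h.2).1⟩, h.2⟩, fun h => ⟨h.1.1, h.2⟩⟩
  rw [hblock B, hblock B']
  exact (hM.minor _ _).card_filter_eq (fun a b hab => by rw [flagClass_eq_of_mRel hab])
    ((mem_flagQuotBases_iff hM).1 hB _ (lv_le_card C p))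
    ((mem_flagQuotBases_iff hM).1 hB' _ (lv_le_card C p))

theorem vectorSpan_flagMinor_le (hM : IsMatroid n 𝓑) (j : ℕ) :
    vectorSpan ℝ (indVec '' (flagMinor 𝓑 C j : Set (Finset (Fin n)))) ≤
      vectorSpan ℝ (indVec '' (flagQuotBases 𝓑 C : Set (Finset (Fin n)))) := by
  obtain ⟨B, hB⟩ := flagQuotBases_nonempty hM C
  rw [← vectorSpan_vadd ℝ _ (indVec (B \ flagBlock C j))]
  refine vectorSpan_mono ℝ ?_
  rintro _ ⟨_, ⟨D, hD, rfl⟩, rfl⟩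
  refine ⟨_, sdiff_union_mem_flagQuotBases hM hB hD, ?_⟩
  exact indVec_union (disjoint_sdiff_self_left.mono_right (subset_flagBlock_of_mem_flagMinor hD))

theorem single_sub_single_mem_vectorSpan_flagQuotBases (hM : IsMatroid n 𝓑) {p q : Fin n}
    (h : flagClass 𝓑 C p = flagClass 𝓑 C q) :
    Pi.single p (1 : ℝ) - Pi.single q 1 ∈
      vectorSpan ℝ (indVec '' (flagQuotBases 𝓑 C : Set (Finset (Fin n)))) :=
  vectorSpan_flagMinor_le hM _ <|
    (hM.minor _ _).single_sub_single_mem_vectorSpan (Quot.eqvGen_exact (flagClass_eq_iff.1 h).2)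

theorem card_image_flagClass (C : Finset (Finset (Fin n))) :
    #(univ.image (flagClass 𝓑 C)) =
      ∑ j ∈ range (C.card + 1), cOn (flagBlock C j) (flagMinor 𝓑 C j) := by
  have hsigma : univ.image (flagClass 𝓑 C) =
      (range (C.card + 1)).sigma fun j => (flagBlock C j).image (Quot.mk _) := by
    ext ⟨j, c⟩
    simp only [mem_image, mem_univ, true_and, mem_sigma, mem_range, flagClass]
    constructor
    · rintro ⟨p, h⟩
      obtain ⟨rfl, h⟩ := Sigma.mk.inj_iff.1 h
      exact ⟨Nat.lt_succ_of_le (lv_le_card C p), p, mem_flagBlock.2 rfl, eq_of_heq h⟩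
    · rintro ⟨-, p, hp, rfl⟩
      obtain rfl := mem_flagBlock.1 hp
      exact ⟨p, rfl⟩
  rw [hsigma, card_sigma]
  refine sum_congr rfl fun j _ => ?_
  rw [cOn, ← coe_image, Set.ncard_coe_finset]

theorem rkM_eq_sub (𝓑 C : Finset (Finset (Fin n))) :
    rkM 𝓑 C = n - ∑ j ∈ range (C.card + 1), cOn (flagBlock C j) (flagMinor 𝓑 C j) := by
  have hc : ∀ j, cOn (flagBlock C j) (flagMinor 𝓑 C j) ≤
      #(fullChain C (j + 1)) - #(fullChain C j) := fun j => by
    rw [← card_sdiff_of_subset (fullChain_mono C j.le_succ), cOn]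
    exact (Set.ncard_image_le (Set.toFinite _)).trans (Set.ncard_coe_finset _).le
  change ∑ j ∈ range (C.card + 1),
    (#(fullChain C (j + 1)) - #(fullChain C j) - cOn (flagBlock C j) (flagMinor 𝓑 C j)) = _
  rw [sum_tsub_distrib _ fun j _ => hc j,
    sum_range_tsub (fun _ _ h => card_le_card (fullChain_mono C h)),
    fullChain_of_card_lt (Nat.lt_succ_self _), fullChain_zero, card_univ, Fintype.card_fin,
    card_empty, tsub_zero]

theorem finrank_vectorSpan_flagQuotBases (hM : IsMatroid n 𝓑) (C : Finset (Finset (Fin n))) :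
    Module.finrank ℝ (vectorSpan ℝ (indVec '' (flagQuotBases 𝓑 C : Set (Finset (Fin n))))) =
      rkM 𝓑 C := by
  rw [finrank_vectorSpan_indVec (flagClass 𝓑 C)
    (fun B hB B' hB' p => card_filter_flagClass_eq hM hB hB' p)
    (fun p q h => single_sub_single_mem_vectorSpan_flagQuotBases hM h),
    card_image_flagClass, rkM_eq_sub]

end FlagQuotient

theorem FqEnum_matroid_eq_Psi_general (n : ℕ)
    (𝓑 : Finset (Finset (Fin n))) (h𝓑 : IsMatroid n 𝓑)
    (faceOf : Finset (Finset (Fin n)) → Set (Fin n → ℝ))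
    (hface : ∀ C : Finset (Finset (Fin n)), IsFlag n C →
      IsFace (basePoly 𝓑) (faceOf C) ∧
        ∀ ω ∈ relintBraidCone C, argmaxSet (basePoly 𝓑) ω = faceOf C)
    (q : ℚ) :
    FqEnum n (fun C => pdim (faceOf C)) q
      = ∑ C : Finset (Finset (Fin n)),
          (if IsFlag n C then q ^ (rkM 𝓑 C) • Mc (flagType C) else 0) := by
  have hdim : ∀ C, IsFlag n C → pdim (faceOf C) = rkM 𝓑 C := fun C hC => by
    rw [← (hface C hC).2 _ (flagWeight_mem_relintBraidCone hC), argmaxSet_basePoly_flagWeight h𝓑,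
      pdim, ← direction_affineSpan, affineSpan_convexHull, direction_affineSpan,
      finrank_vectorSpan_flagQuotBases h𝓑]
  refine sum_congr rfl fun C _ => ?_
  split_ifs with hC
  · simp only [hdim C hC]
  · rfl

/-- For a matroid `M` on `[n]`, the weighted quasisymmetric enumerator of the
matroid base polytope coincides with the value of the universal morphism of combinatorial Hopf
algebras: `F_q(P_M) = Ψ_q([M]) = Σ_F q^{rk_{P_M}(F)} M_{type(F)}`, whose coefficient of `M_α`
equals `Σ_{F : type(F) = α} Π_i q^{rk((M|_{F_i})/F_{i-1})}` with
`rk(N) = (size of ground set of N) - c(N)`.  Here `F_q(P_M) = Σ_F q^{dim π_{P_M}(F)} M_{type F}`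
with `faceOf F = π_{P_M}(F)` the face of `P_M` attached to a flag `F`. -/
theorem FqEnum_matroid_eq_Psi (n : ℕ) (hn : 0 < n)
    (𝓑 : Finset (Finset (Fin n))) (h𝓑 : IsMatroid n 𝓑)
    (faceOf : Finset (Finset (Fin n)) → Set (Fin n → ℝ))
    (hface : ∀ C : Finset (Finset (Fin n)), IsFlag n C →
      IsFace (basePoly 𝓑) (faceOf C) ∧
        ∀ ω ∈ relintBraidCone C, argmaxSet (basePoly 𝓑) ω = faceOf C)
    (q : ℚ) :
    FqEnum n (fun C => pdim (faceOf C)) q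
      = ∑ C : Finset (Finset (Fin n)),
          (if IsFlag n C then q ^ (rkM 𝓑 C) • Mc (flagType C) else 0) :=
  FqEnum_matroid_eq_Psi_general n 𝓑 h𝓑 faceOf hface q
end

section
/- For the uniform matroid U_{n,r} with 0 < r < n, the f-polynomial of the hypersimplex P_{U_{n,r}} = Δ_r^n is f(P_{U_{n,r}}, q) = C(n,r) + Σ_{0 ≤ r' < r < r'+λ ≤ n} C(n, r') C(n−r', λ) q^{λ−1}. Equivalently, the f-vector is f_0 = C(n,r) and, for k = 2,…,n, f_{k−1} = Σ_{0 ≤ r' < r < r'+k ≤ n} n!/(r'!·k!·(n−r'−k)!). -/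
open scoped Classical Pointwise BigOperators


/-- The bases of the uniform matroid `U_{n,r}`: all `r`-element subsets of `[n]`; the
corresponding base polytope is the hypersimplex `Δ_r^n`. -/
def uniformBases (n r : ℕ) : Finset (Finset (Fin n)) :=
  (Finset.univ : Finset (Fin n)).powersetCard r


/-!
A linear functional `ω` is maximized over the vertices `e_B`, `|B| = r`, of the hypersimplex
exactly at the sets `B` with `S ⊆ B ⊆ T`, where `S = {ω > θ}` and `T = {ω ≥ θ}` for `θ` the
`r`-th largest value of `ω`: shifting `ω` by `θ` does not change the ranking of `r`-sets, and
`Σ_{i ∈ B} (ω i - θ)` is largest when `B` takes every positive and no negative term. Hence the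
faces are the polytopes `conv {e_B : S ⊆ B ⊆ T}` with `|S| < r ≤ |T|`. For `|T| = r` this is the
vertex `e_T`; otherwise it has dimension `|T| - |S| - 1`, spanned by the `e_i - e_{i₀}` with
`i, i₀ ∈ T \ S`, and it determines `(S, T)`: `S` is where all its points have coordinate `1`,
`T` where some point has a nonzero coordinate. Counting chains `S ⊆ T` with `|S| = r'` and
`|T| = r' + k` gives `C(n, r') C(n - r', k)`.
-/

open Finset

section Maximizers

variable {E : Type*} [AddCommGroup E] [Module ℝ E]

theorem maximizers_convexHull (f : E →ₗ[ℝ] ℝ) (V : Finset E) :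
    {x | x ∈ convexHull ℝ (V : Set E) ∧ ∀ y ∈ convexHull ℝ (V : Set E), f y ≤ f x}
      = convexHull ℝ ↑{v ∈ V | ∀ u ∈ V, f u ≤ f v} := by
  rcases V.eq_empty_or_nonempty with rfl | hV
  · simp
  obtain ⟨v₀, hv₀, hmax⟩ := V.exists_max_image f hV
  set W := {v ∈ V | ∀ u ∈ V, f u ≤ f v}
  have hWV : W ⊆ V := filter_subset _ V
  have hle : ∀ x ∈ convexHull ℝ (V : Set E), f x ≤ f v₀ := fun _ hx =>
    convexHull_min hmax (convex_halfSpace_le f.isLinear (f v₀)) hx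
  ext x
  refine ⟨fun ⟨hx, hxmax⟩ => ?_, fun hx => ⟨convexHull_mono hWV hx, fun y hy => ?_⟩⟩
  · have hfx : f x = f v₀ := le_antisymm (hle x hx) (hxmax v₀ (subset_convexHull ℝ _ hv₀))
    obtain ⟨w, hw₀, hw₁, rfl⟩ := mem_convexHull'.1 hx
    have hzero : ∀ v ∈ V, w v * (f v₀ - f v) = 0 := by
      refine (sum_eq_zero_iff_of_nonneg fun v hv =>
        mul_nonneg (hw₀ v hv) (sub_nonneg.2 (hmax v hv))).1 ?_
      simp only [mul_sub, sum_sub_distrib, ← sum_mul, hw₁, one_mul]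
      rw [← hfx, map_sum]
      simp [smul_eq_mul]
    have hoff : ∀ v ∈ V, v ∉ W → w v = 0 := by
      intro v hv hvW
      refine (mul_eq_zero.1 (hzero v hv)).resolve_right fun h => hvW ?_
      exact mem_filter.2 ⟨hv, fun u hu => by linarith [hmax u hu]⟩
    refine mem_convexHull'.2 ⟨w, fun v hv => hw₀ v (hWV hv), ?_, ?_⟩
    · rwa [sum_subset hWV hoff]
    · exact sum_subset hWV fun v hv hvW => by rw [hoff v hv hvW, zero_smul]
  · have hfx : f x = f v₀ := convexHull_min
      (fun v hv => le_antisymm (hmax v (hWV hv)) ((mem_filter.1 hv).2 v₀ hv₀))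
      (convex_hyperplane f.isLinear (f v₀)) hx
    exact hfx ▸ hle y hy

end Maximizers

lemma apply_eq_of_mem_convexHull {ι : Type*} {s : Set (ι → ℝ)} {i : ι} {c : ℝ}
    (h : ∀ v ∈ s, v i = c) {x : ι → ℝ} (hx : x ∈ convexHull ℝ s) : x i = c :=
  convexHull_min h (convex_hyperplane (LinearMap.proj i : (ι → ℝ) →ₗ[ℝ] ℝ).isLinear c) hx

section Threshold

variable {α : Type*} [Fintype α]

lemma sum_le_sum_filter_pos (g : α → ℝ) (B : Finset α) :
    ∑ i ∈ B, g i ≤ ∑ i with 0 < g i, g i := by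
  rw [← sum_ite_mem_eq, sum_filter]
  refine sum_le_sum fun i _ => ?_
  split_ifs <;> linarith

lemma sum_eq_sum_filter_pos_iff (g : α → ℝ) (B : Finset α) :
    ∑ i ∈ B, g i = ∑ i with 0 < g i, g i ↔
      ({i | 0 < g i} : Finset α) ⊆ B ∧ B ⊆ ({i | 0 ≤ g i} : Finset α) := by
  rw [← sum_ite_mem_eq, sum_filter,
    sum_eq_sum_iff_of_le fun i _ => by split_ifs <;> linarith]
  simp only [subset_iff, mem_filter, mem_univ, true_and, ← forall_and]
  refine forall_congr' fun i => ?_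
  split_ifs <;> constructor <;> intros <;> simp_all <;> linarith

lemma sum_le_sum_iff_of_threshold {r : ℕ} (ω : α → ℝ) (θ : ℝ)
    (h1 : #({i | θ < ω i} : Finset α) ≤ r) (h2 : r ≤ #({i | θ ≤ ω i} : Finset α))
    {B : Finset α} (hB : #B = r) :
    (∀ B' : Finset α, #B' = r → ∑ i ∈ B', ω i ≤ ∑ i ∈ B, ω i)
      ↔ ({i | θ < ω i} : Finset α) ⊆ B ∧ B ⊆ ({i | θ ≤ ω i} : Finset α) := by
  have hshift : ∀ B' : Finset α, #B' = r → ∑ i ∈ B', ω i = ∑ i ∈ B', (ω i - θ) + r * θ := by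
    intro B' hB'
    simp [sum_sub_distrib, hB']
  simp only [← sub_pos (b := θ), ← sub_nonneg (b := θ)] at h1 h2 ⊢
  rw [← sum_eq_sum_filter_pos_iff]
  obtain ⟨B₀, hSB₀, hB₀T, hB₀⟩ :=
    exists_subsuperset_card_eq (monotone_filter_right _ fun _ _ => le_of_lt) h1 h2
  constructor
  · intro hmax
    refine le_antisymm (sum_le_sum_filter_pos _ B) ?_
    have := hmax B₀ hB₀
    rw [hshift B₀ hB₀, hshift B hB, (sum_eq_sum_filter_pos_iff _ B₀).2 ⟨hSB₀, hB₀T⟩] at this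
    linarith
  · intro heq B' hB'
    rw [hshift B' hB', hshift B hB, heq]
    linarith [sum_le_sum_filter_pos (fun i => ω i - θ) B']

end Threshold

lemma exists_threshold {n r : ℕ} (hr : 0 < r) (hrn : r ≤ n) (ω : Fin n → ℝ) :
    ∃ θ : ℝ, #({i | θ < ω i} : Finset (Fin n)) < r ∧ r ≤ #({i | θ ≤ ω i} : Finset (Fin n)) := by
  let σ := Tuple.sort ω
  have hmono : Monotone (ω ∘ σ) := Tuple.monotone_sort ω
  let k : Fin n := ⟨n - r, by omega⟩
  refine ⟨ω (σ k), ?_, ?_⟩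
  · calc #({i | ω (σ k) < ω i} : Finset (Fin n)) ≤ #((Ioi k).map σ.toEmbedding) := by
          refine card_le_card fun i hi => ?_
          rw [mem_map_equiv, mem_Ioi]
          by_contra! h
          simpa using (hmono h).trans_lt (mem_filter.1 hi).2
      _ < r := by simp [Fin.card_Ioi, k]; omega
  · calc r = #((Ici k).map σ.toEmbedding) := by simp [Fin.card_Ici, k]; omega
      _ ≤ _ := by
          refine card_le_card fun i hi => ?_
          rw [mem_map_equiv, mem_Ici] at hi
          simpa using hmono hi

section Span

variable {α : Type*} [DecidableEq α]

lemma mem_span_single_sub_single [Fintype α] {D : Finset α} {i₀ : α} {x : α → ℝ}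
    (hx : ∀ j ∉ D, x j = 0) (hsum : ∑ j, x j = 0) :
    x ∈ Submodule.span ℝ ((fun i => Pi.single i 1 - Pi.single i₀ 1) '' ↑(D.erase i₀)) := by
  have hD : ∑ i ∈ D, x i = 0 := by
    rwa [sum_subset (subset_univ D) fun j _ hj => hx j hj]
  have hx' : x = ∑ i ∈ D.erase i₀, x i • (Pi.single i 1 - Pi.single i₀ 1 : α → ℝ) := by
    rw [sum_erase _ (by simp)]
    simp only [smul_sub, sum_sub_distrib, ← sum_smul, hD, zero_smul, sub_zero]
    ext j
    by_cases hj : j ∈ D <;> simp [Pi.single_apply, hj, hx]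
  rw [hx']
  exact Submodule.sum_mem _ fun i hi =>
    Submodule.smul_mem _ _ (Submodule.subset_span ⟨i, hi, rfl⟩)

lemma linearIndependent_single_sub_single (D : Finset α) (i₀ : α) :
    LinearIndependent ℝ (fun i : D.erase i₀ => (Pi.single (i : α) 1 - Pi.single i₀ 1 : α → ℝ)) := by
  rw [Fintype.linearIndependent_iff]
  intro g hg i
  have hi : (i : α) ≠ i₀ := (mem_erase.1 i.2).1
  have := congrFun hg i
  rw [Finset.sum_apply, sum_eq_single i] at this
  · simpa [hi] using this
  · intro j _ hji
    simp [hi, Subtype.coe_ne_coe.2 hji.symm]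
  · simp

lemma finrank_span_single_sub_single {D : Finset α} {i₀ : α} (hi₀ : i₀ ∈ D) :
    Module.finrank ℝ
      (Submodule.span ℝ ((fun i => (Pi.single i 1 - Pi.single i₀ 1 : α → ℝ)) '' ↑(D.erase i₀)))
      = #D - 1 := by
  rw [← card_erase_of_mem hi₀, ← Fintype.card_coe,
    ← finrank_span_eq_card (linearIndependent_single_sub_single D i₀), Set.image_eq_range]
  rfl

end Span

lemma card_subset_pairs (α : Type*) [Fintype α] [DecidableEq α] (a b : ℕ) :
    #({p | p.1 ⊆ p.2 ∧ #p.1 = a ∧ #p.2 = b} : Finset (Finset α × Finset α))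
      = (Fintype.card α).choose b * b.choose a := by
  have : #({p | p.1 ⊆ p.2 ∧ #p.1 = a ∧ #p.2 = b} : Finset (Finset α × Finset α))
      = #((powersetCard b (univ : Finset α)).sigma fun T => powersetCard a T) :=
    card_nbij' (fun p => ⟨p.2, p.1⟩) (fun q => (q.2, q.1)) (fun p hp => by simp_all)
      (fun q hq => by simp_all) (fun p _ => rfl) (fun q _ => rfl)
  rw [this, card_sigma, sum_congr rfl fun T hT => by
    rw [card_powersetCard, (mem_powersetCard.1 hT).2], sum_const, card_powersetCard, card_univ,
    smul_eq_mul]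

lemma factorial_div_eq_choose_mul_choose {n a b : ℕ} (h : a + b ≤ n) :
    n.factorial / (a.factorial * b.factorial * (n - a - b).factorial)
      = n.choose a * (n - a).choose b := by
  refine Nat.div_eq_of_eq_mul_left (by positivity) ?_
  calc n.factorial = n.choose a * a.factorial * (n - a).factorial :=
        (Nat.choose_mul_factorial_mul_factorial (by omega)).symm
    _ = n.choose a * a.factorial * ((n - a).choose b * b.factorial * (n - a - b).factorial) := by
        rw [Nat.choose_mul_factorial_mul_factorial (n := n - a) (by omega)]
    _ = _ := by ring

section Hypersimplex

variable {n r : ℕ} {S T : Finset (Fin n)}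

lemma mem_uniformBases {B : Finset (Fin n)} : B ∈ uniformBases n r ↔ #B = r := by
  simp [uniformBases]

lemma dotProduct_indVec (ω : Fin n → ℝ) (B : Finset (Fin n)) : ω ⬝ᵥ indVec B = ∑ i ∈ B, ω i := by
  simp only [dotProduct, indVec, mul_ite, mul_one, mul_zero, sum_ite_mem_eq]

lemma sum_indVec (B : Finset (Fin n)) : ∑ j, indVec B j = #B := by
  simp [indVec]

lemma indVec_injective : Function.Injective (indVec (n := n)) := by
  intro A B h
  ext i
  have := congrFun h i
  simp only [indVec] at this
  split_ifs at this <;> simp_all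

lemma indVec_insert_sub_indVec_insert {C : Finset (Fin n)} {i i₀ : Fin n} (hi : i ∉ C)
    (hi₀ : i₀ ∉ C) : indVec (insert i C) - indVec (insert i₀ C) = Pi.single i 1 - Pi.single i₀ 1 := by
  ext j
  by_cases hj : j ∈ C
  · simp [indVec, hj, ne_of_mem_of_not_mem hj hi, ne_of_mem_of_not_mem hj hi₀]
  · simp [indVec, hj, Pi.single_apply]

def faceVerts (n r : ℕ) (S T : Finset (Fin n)) : Finset (Finset (Fin n)) :=
  {B ∈ uniformBases n r | S ⊆ B ∧ B ⊆ T}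

def hypersimplexFace (n r : ℕ) (S T : Finset (Fin n)) : Set (Fin n → ℝ) :=
  convexHull ℝ (indVec '' (faceVerts n r S T : Set (Finset (Fin n))))

lemma mem_faceVerts {B : Finset (Fin n)} : B ∈ faceVerts n r S T ↔ #B = r ∧ S ⊆ B ∧ B ⊆ T := by
  simp [faceVerts, mem_uniformBases]

theorem argmaxSet_basePoly_uniformBases (ω : Fin n → ℝ) (θ : ℝ)
    (h1 : #({i | θ < ω i} : Finset (Fin n)) ≤ r) (h2 : r ≤ #({i | θ ≤ ω i} : Finset (Fin n))) :
    argmaxSet (basePoly (uniformBases n r)) ω = hypersimplexFace n r {i | θ < ω i} {i | θ ≤ ω i} := by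
  rw [basePoly, hypersimplexFace, ← coe_image, ← coe_image]
  refine (maximizers_convexHull (dotProductBilin ℝ ℝ ω) _).trans (congrArg _ ?_)
  ext v
  simp only [dotProductBilin_apply_apply, mem_coe, mem_filter, mem_image, forall_exists_index,
    and_imp, forall_apply_eq_imp_iff₂, dotProduct_indVec]
  constructor
  · rintro ⟨⟨B, hB, rfl⟩, hmax⟩
    have hBr := mem_uniformBases.1 hB
    refine ⟨B, mem_faceVerts.2 ⟨hBr, (sum_le_sum_iff_of_threshold ω θ h1 h2 hBr).1 ?_⟩, rfl⟩
    intro B' hB'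
    simpa [dotProduct_indVec] using hmax B' (mem_uniformBases.2 hB')
  · rintro ⟨B, hB, rfl⟩
    obtain ⟨hBr, hSB, hBT⟩ := mem_faceVerts.1 hB
    refine ⟨⟨B, mem_uniformBases.2 hBr, rfl⟩, fun B' hB' => ?_⟩
    rw [dotProduct_indVec]
    exact (sum_le_sum_iff_of_threshold ω θ h1 h2 hBr).2 ⟨hSB, hBT⟩ B' (mem_uniformBases.1 hB')

theorem isFace_basePoly_uniformBases_iff (hr : 0 < r) (hrn : r ≤ n) {G : Set (Fin n → ℝ)} :
    IsFace (basePoly (uniformBases n r)) G ↔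
      ∃ S T : Finset (Fin n), S ⊆ T ∧ #S < r ∧ r ≤ #T ∧ G = hypersimplexFace n r S T := by
  constructor
  · rintro ⟨ω, rfl⟩
    obtain ⟨θ, h1, h2⟩ := exists_threshold hr hrn ω
    exact ⟨_, _, monotone_filter_right _ fun _ _ => le_of_lt, h1, h2,
      argmaxSet_basePoly_uniformBases ω θ h1.le h2⟩
  · rintro ⟨S, T, hST, h1, h2, rfl⟩
    have hS : ({i | 1 < indVec S i + indVec T i} : Finset (Fin n)) = S := by
      ext i
      simp only [mem_filter, mem_univ, true_and]
      simp only [indVec]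
      split_ifs <;> norm_num <;> grind
    have hT : ({i | 1 ≤ indVec S i + indVec T i} : Finset (Fin n)) = T := by
      ext i
      simp only [mem_filter, mem_univ, true_and]
      simp only [indVec]
      split_ifs <;> norm_num <;> grind
    refine ⟨indVec S + indVec T, ?_⟩
    rw [argmaxSet_basePoly_uniformBases _ 1 (by rw [Pi.add_def, hS]; exact h1.le)
      (by rwa [Pi.add_def, hT]), Pi.add_def, hS, hT]

lemma exists_mem_faceVerts_mem (hST : S ⊆ T) (h1 : #S < r) (h2 : r ≤ #T) {i : Fin n}
    (hi : i ∈ T) : ∃ B ∈ faceVerts n r S T, i ∈ B := by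
  obtain ⟨B, hSB, hBT, hB⟩ :=
    exists_subsuperset_card_eq (insert_subset hi hST) ((card_insert_le i S).trans h1) h2
  exact ⟨B, mem_faceVerts.2 ⟨hB, (subset_insert i S).trans hSB, hBT⟩, hSB (mem_insert_self i S)⟩

lemma exists_mem_faceVerts_not_mem (hST : S ⊆ T) (h1 : #S ≤ r) (h2 : r < #T) {i : Fin n}
    (hi : i ∉ S) : ∃ B ∈ faceVerts n r S T, i ∉ B := by
  have hS : S ⊆ T.erase i := fun j hj => mem_erase.2 ⟨fun h => hi (h ▸ hj), hST hj⟩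
  obtain ⟨B, hSB, hBT, hB⟩ :=
    exists_subsuperset_card_eq hS h1 ((Nat.le_pred_of_lt h2).trans (pred_card_le_card_erase))
  exact ⟨B, mem_faceVerts.2 ⟨hB, hSB, hBT.trans (erase_subset i T)⟩,
    fun h => (mem_erase.1 (hBT h)).1 rfl⟩

lemma indVec_mem_hypersimplexFace {B : Finset (Fin n)} (hB : B ∈ faceVerts n r S T) :
    indVec B ∈ hypersimplexFace n r S T :=
  subset_convexHull ℝ _ (Set.mem_image_of_mem indVec hB)

lemma apply_eq_one_of_mem_hypersimplexFace {i : Fin n} (hi : i ∈ S) {x : Fin n → ℝ}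
    (hx : x ∈ hypersimplexFace n r S T) : x i = 1 := by
  refine apply_eq_of_mem_convexHull ?_ hx
  rintro _ ⟨B, hB, rfl⟩
  simp [indVec, (mem_faceVerts.1 hB).2.1 hi]

lemma apply_eq_zero_of_mem_hypersimplexFace {i : Fin n} (hi : i ∉ T) {x : Fin n → ℝ}
    (hx : x ∈ hypersimplexFace n r S T) : x i = 0 := by
  refine apply_eq_of_mem_convexHull ?_ hx
  rintro _ ⟨B, hB, rfl⟩
  have hiB : i ∉ B := fun h => hi ((mem_faceVerts.1 hB).2.2 h)
  simp [indVec, hiB]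

lemma mem_iff_forall_mem_hypersimplexFace (hST : S ⊆ T) (h1 : #S < r) (h2 : r < #T)
    (i : Fin n) : i ∈ S ↔ ∀ x ∈ hypersimplexFace n r S T, x i = 1 := by
  refine ⟨fun hi x hx => apply_eq_one_of_mem_hypersimplexFace hi hx, fun h => ?_⟩
  by_contra hi
  obtain ⟨B, hB, hiB⟩ := exists_mem_faceVerts_not_mem hST h1.le h2 hi
  simpa [indVec, hiB] using h _ (indVec_mem_hypersimplexFace hB)

lemma mem_iff_exists_mem_hypersimplexFace (hST : S ⊆ T) (h1 : #S < r) (h2 : r < #T)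
    (i : Fin n) : i ∈ T ↔ ∃ x ∈ hypersimplexFace n r S T, x i ≠ 0 := by
  refine ⟨fun hi => ?_, fun ⟨x, hx, hxi⟩ => ?_⟩
  · obtain ⟨B, hB, hiB⟩ := exists_mem_faceVerts_mem hST h1 h2.le hi
    exact ⟨_, indVec_mem_hypersimplexFace hB, by simp [indVec, hiB]⟩
  · by_contra hi
    exact hxi (apply_eq_zero_of_mem_hypersimplexFace hi hx)

lemma hypersimplexFace_injOn :
    Set.InjOn (fun p : Finset (Fin n) × Finset (Fin n) => hypersimplexFace n r p.1 p.2)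
      {p | p.1 ⊆ p.2 ∧ #p.1 < r ∧ r < #p.2} := by
  rintro ⟨S, T⟩ ⟨hST, h1, h2⟩ ⟨S', T'⟩ ⟨hST', h1', h2'⟩ h
  simp only at h
  ext i
  · rw [mem_iff_forall_mem_hypersimplexFace hST h1 h2,
      mem_iff_forall_mem_hypersimplexFace hST' h1' h2', h]
  · rw [mem_iff_exists_mem_hypersimplexFace hST h1 h2,
      mem_iff_exists_mem_hypersimplexFace hST' h1' h2', h]

lemma hypersimplexFace_eq_singleton (hST : S ⊆ T) (hT : #T = r) :
    hypersimplexFace n r S T = {indVec T} := by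
  have : faceVerts n r S T = {T} := by
    ext B
    simp only [mem_faceVerts, mem_singleton]
    exact ⟨fun ⟨hB, _, hBT⟩ => eq_of_subset_of_card_le hBT (by omega),
      fun h => ⟨h ▸ hT, h ▸ hST, h.le⟩⟩
  simp [hypersimplexFace, this]

lemma vectorSpan_hypersimplexFace (hST : S ⊆ T) (h1 : #S < r) (h2 : r < #T) {i₀ : Fin n}
    (hi₀ : i₀ ∈ T \ S) :
    vectorSpan ℝ (hypersimplexFace n r S T)
      = Submodule.span ℝ ((fun i => Pi.single i 1 - Pi.single i₀ 1) '' ↑((T \ S).erase i₀)) := by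
  rw [hypersimplexFace, ← direction_affineSpan, affineSpan_convexHull, direction_affineSpan,
    vectorSpan_def]
  refine le_antisymm (Submodule.span_le.2 ?_) (Submodule.span_le.2 ?_)
  · rintro _ ⟨_, ⟨B, hB, rfl⟩, _, ⟨B', hB', rfl⟩, rfl⟩
    obtain ⟨hBr, hSB, hBT⟩ := mem_faceVerts.1 hB
    obtain ⟨hB'r, hSB', hB'T⟩ := mem_faceVerts.1 hB'
    refine mem_span_single_sub_single (fun j hj => ?_) ?_
    · rw [mem_sdiff, not_and_not_right] at hj
      by_cases hjT : j ∈ T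
      · simp [indVec, hSB (hj hjT), hSB' (hj hjT)]
      · have hjB : j ∉ B := fun h => hjT (hBT h)
        have hjB' : j ∉ B' := fun h => hjT (hB'T h)
        simp [indVec, hjB, hjB']
    · simp [sum_sub_distrib, sum_indVec, hBr, hB'r]
  · rintro _ ⟨i, hi, rfl⟩
    obtain ⟨⟨hiT, hiS⟩, hii₀⟩ : (i ∈ T ∧ i ∉ S) ∧ i ≠ i₀ := by simpa using hi
    obtain ⟨hi₀T, hi₀S⟩ := mem_sdiff.1 hi₀
    -- `e_i - e_{i₀}` is the difference of the vertices `e_{C ∪ {i}}` and `e_{C ∪ {i₀}}`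
    have hS : S ⊆ (T.erase i).erase i₀ := fun j hj =>
      mem_erase.2 ⟨fun h => hi₀S (h ▸ hj), mem_erase.2 ⟨fun h => hiS (h ▸ hj), hST hj⟩⟩
    obtain ⟨C, hSC, hCT, hC⟩ := exists_subsuperset_card_eq hS (by omega : #S ≤ r - 1) (by
      rw [card_erase_of_mem (mem_erase.2 ⟨Ne.symm hii₀, hi₀T⟩), card_erase_of_mem hiT]; omega)
    have hiC : i ∉ C := fun h => (mem_erase.1 (mem_erase.1 (hCT h)).2).1 rfl
    have hi₀C : i₀ ∉ C := fun h => (mem_erase.1 (hCT h)).1 rfl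
    have hCT' : C ⊆ T := hCT.trans ((erase_subset _ _).trans (erase_subset _ _))
    have hvert : ∀ j ∈ T, j ∉ C → indVec (insert j C) ∈ indVec '' ↑(faceVerts n r S T) :=
      fun j hjT hjC => Set.mem_image_of_mem _ (mem_faceVerts.2
        ⟨by rw [card_insert_of_notMem hjC]; omega, hSC.trans (subset_insert j C),
          insert_subset hjT hCT'⟩)
    show Pi.single i 1 - Pi.single i₀ 1 ∈ _
    rw [← indVec_insert_sub_indVec_insert hiC hi₀C]
    exact Submodule.subset_span (Set.vsub_mem_vsub (hvert i hiT hiC) (hvert i₀ hi₀T hi₀C))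

theorem pdim_hypersimplexFace (hST : S ⊆ T) (h1 : #S < r) (h2 : r < #T) :
    pdim (hypersimplexFace n r S T) = #T - #S - 1 := by
  obtain ⟨i₀, hi₀⟩ : (T \ S).Nonempty := by
    rw [← card_pos, card_sdiff_of_subset hST]
    omega
  rw [pdim, vectorSpan_hypersimplexFace hST h1 h2 hi₀, finrank_span_single_sub_single hi₀,
    card_sdiff_of_subset hST]

lemma pdim_singleton (x : Fin n → ℝ) : pdim ({x} : Set (Fin n → ℝ)) = 0 := by
  simp [pdim]

/-- The pairs `(S, T)` indexing the `(k - 1)`-dimensional faces of the hypersimplex, `k ≥ 2`. -/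
def facePairs (n r k : ℕ) : Finset (Finset (Fin n) × Finset (Fin n)) :=
  {p | p.1 ⊆ p.2 ∧ #p.1 < r ∧ r < #p.2 ∧ #p.2 = #p.1 + k}

lemma card_facePairs (n r k : ℕ) :
    #(facePairs n r k) = ∑ r' ∈ range (n + 1),
      if r' < r ∧ r < r' + k ∧ r' + k ≤ n then n.choose r' * (n - r').choose k else 0 := by
  rw [card_eq_sum_card_fiberwise (f := fun p => #p.1) fun p _ =>
    mem_range.2 (Nat.lt_succ_of_le ((card_le_univ p.1).trans_eq (Fintype.card_fin n)))]
  refine sum_congr rfl fun r' _ => ?_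
  split_ifs with h
  · have : {p ∈ facePairs n r k | #p.1 = r'}
        = ({p | p.1 ⊆ p.2 ∧ #p.1 = r' ∧ #p.2 = r' + k} : Finset (Finset (Fin n) × Finset (Fin n))) := by
      ext p
      simp only [facePairs, mem_filter, mem_univ, true_and]
      grind
    rw [this, card_subset_pairs, Fintype.card_fin, Nat.choose_mul (by omega), Nat.add_sub_cancel_left]
  · refine card_eq_zero.2 (filter_eq_empty_iff.2 fun p hp hp₁ => h ?_)
    simp only [facePairs, mem_filter, mem_univ, true_and] at hp
    have := (card_le_univ p.2).trans_eq (Fintype.card_fin n)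
    omega

theorem setOf_isFace_pdim_zero (hr : 0 < r) (hrn : r ≤ n) :
    {G | IsFace (basePoly (uniformBases n r)) G ∧ pdim G = 0}
      = (fun B => {indVec B}) '' ↑(uniformBases n r) := by
  ext G
  constructor
  · rintro ⟨hG, hdim⟩
    obtain ⟨S, T, hST, h1, h2, rfl⟩ := (isFace_basePoly_uniformBases_iff hr hrn).1 hG
    rcases h2.eq_or_lt with h2 | h2
    · exact ⟨T, mem_uniformBases.2 h2.symm, (hypersimplexFace_eq_singleton hST h2.symm).symm⟩
    · have := card_le_card hST
      rw [pdim_hypersimplexFace hST h1 h2] at hdim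
      omega
  · rintro ⟨B, hB, rfl⟩
    have hBr := mem_uniformBases.1 hB
    refine ⟨(isFace_basePoly_uniformBases_iff hr hrn).2 ⟨∅, B, empty_subset B, by simpa using hr,
      hBr.ge, (hypersimplexFace_eq_singleton (empty_subset B) hBr).symm⟩, pdim_singleton _⟩

theorem setOf_isFace_pdim_succ (hr : 0 < r) (hrn : r ≤ n) (i : ℕ) :
    {G | IsFace (basePoly (uniformBases n r)) G ∧ pdim G = i + 1}
      = (fun p : Finset (Fin n) × Finset (Fin n) => hypersimplexFace n r p.1 p.2) ''
          ↑(facePairs n r (i + 2)) := by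
  ext G
  constructor
  · rintro ⟨hG, hdim⟩
    obtain ⟨S, T, hST, h1, h2, rfl⟩ := (isFace_basePoly_uniformBases_iff hr hrn).1 hG
    rcases h2.eq_or_lt with h2 | h2
    · rw [hypersimplexFace_eq_singleton hST h2.symm, pdim_singleton] at hdim
      omega
    · have := card_le_card hST
      rw [pdim_hypersimplexFace hST h1 h2] at hdim
      exact ⟨(S, T), by simp [facePairs, hST, h1, h2]; omega, rfl⟩
  · rintro ⟨⟨S, T⟩, hp, rfl⟩
    obtain ⟨hST, h1, h2, hk⟩ : S ⊆ T ∧ #S < r ∧ r < #T ∧ #T = #S + (i + 2) := by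
      simpa [facePairs] using hp
    refine ⟨(isFace_basePoly_uniformBases_iff hr hrn).2 ⟨S, T, hST, h1, h2.le, rfl⟩, ?_⟩
    rw [pdim_hypersimplexFace hST h1 h2]
    omega

theorem ncard_setOf_isFace_pdim_zero (hr : 0 < r) (hrn : r ≤ n) :
    {G | IsFace (basePoly (uniformBases n r)) G ∧ pdim G = 0}.ncard = n.choose r := by
  rw [setOf_isFace_pdim_zero hr hrn, Set.ncard_image_of_injective _
    fun _ _ h => indVec_injective (Set.singleton_injective h), Set.ncard_coe_finset, uniformBases,
    card_powersetCard, card_univ, Fintype.card_fin]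

theorem ncard_setOf_isFace_pdim_succ (hr : 0 < r) (hrn : r ≤ n) (i : ℕ) :
    {G | IsFace (basePoly (uniformBases n r)) G ∧ pdim G = i + 1}.ncard
      = #(facePairs n r (i + 2)) := by
  rw [setOf_isFace_pdim_succ hr hrn, Set.InjOn.ncard_image
    (hypersimplexFace_injOn.mono fun p hp => by simp only [facePairs, coe_filter] at hp; grind),
    Set.ncard_coe_finset]

end Hypersimplex

/-- For the uniform matroid `U_{n,r}` with `0 < r < n`, the `f`-polynomial of
the hypersimplex `P_{U_{n,r}} = Δ_r^n` is
`f(P_{U_{n,r}}, q) = C(n,r) + Σ_{0 ≤ r' < r < r'+λ ≤ n} C(n,r') C(n-r',λ) q^{λ-1}`.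
Equivalently, the `f`-vector is `f₀ = C(n,r)` and, for `k = 2,…,n`,
`f_{k-1} = Σ_{0 ≤ r' < r < r'+k ≤ n} n!/(r'!·k!·(n-r'-k)!)`. -/
theorem fPoly_hypersimplex (n r : ℕ) (hr : 0 < r) (hrn : r < n) :
    (∀ q : ℚ, fPoly (basePoly (uniformBases n r)) q
        = (n.choose r : ℚ) +
          ∑ r' ∈ Finset.range (n + 1), ∑ l ∈ Finset.range (n + 1),
            (if r' < r ∧ r < r' + l ∧ r' + l ≤ n
              then (n.choose r' : ℚ) * ((n - r').choose l : ℚ) * q ^ (l - 1) else 0)) ∧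
    (Set.ncard {G : Set (Fin n → ℝ) | IsFace (basePoly (uniformBases n r)) G ∧ pdim G = 0}
        = n.choose r) ∧
    (∀ k : ℕ, 2 ≤ k → k ≤ n →
      Set.ncard {G : Set (Fin n → ℝ) |
          IsFace (basePoly (uniformBases n r)) G ∧ pdim G = k - 1}
        = ∑ r' ∈ Finset.range (n + 1),
            (if r' < r ∧ r < r' + k ∧ r' + k ≤ n
              then n.factorial / (r'.factorial * k.factorial * (n - r' - k).factorial)
              else 0)) := by
  obtain ⟨m, rfl⟩ : ∃ m, n = m + 1 := ⟨n - 1, by omega⟩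
  refine ⟨fun q => ?_, ncard_setOf_isFace_pdim_zero hr hrn.le, fun k hk _ => ?_⟩
  · have hcard : ∀ i, (#(facePairs (m + 1) r (i + 2)) : ℚ) * q ^ (i + 1) =
        ∑ r' ∈ range (m + 2), if r' < r ∧ r < r' + (i + 2) ∧ r' + (i + 2) ≤ m + 1
          then ((m + 1).choose r' : ℚ) * ((m + 1 - r').choose (i + 2) : ℚ) * q ^ (i + 2 - 1)
          else 0 := by
      intro i
      rw [card_facePairs, Nat.cast_sum, sum_mul]
      refine sum_congr rfl fun r' _ => ?_
      split_ifs <;> simp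
    have hlow : ∀ r' l, l ≤ 1 → ¬(r' < r ∧ r < r' + l ∧ r' + l ≤ m + 1) := by omega
    rw [fPoly, sum_range_succ', sum_comm, sum_range_succ', sum_range_succ']
    simp only [ncard_setOf_isFace_pdim_succ hr hrn.le, ncard_setOf_isFace_pdim_zero hr hrn.le,
      hcard, hlow _ 0 zero_le_one, hlow _ (0 + 1) le_rfl, if_false, sum_const_zero]
    ring
  · obtain ⟨i, rfl⟩ : ∃ i, k = i + 2 := ⟨k - 2, by omega⟩
    rw [show i + 2 - 1 = i + 1 from rfl, ncard_setOf_isFace_pdim_succ hr hrn.le, card_facePairs]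
    refine sum_congr rfl fun r' _ => ?_
    split_ifs with h
    · exact (factorial_div_eq_choose_mul_choose h.2.2).symm
    · rfl
end

section
/- Let M be a matroid on [n] with dual matroid M*. Writing F_q(M) = Σ_{α ⊨ n} p_α(q) M_α in the monomial basis of quasisymmetric functions, one has F_q(M*) = Σ_{α ⊨ n} p_α(q) M_{rev(α)}; that is, F_q(M) has coefficients p_α(q) if and only if F_q(M*) has coefficient p_α(q) attached to the reverse composition rev(α). -/
open scoped Classical Pointwise BigOperators


/-- The bases of the dual matroid `M*`: complements of the bases of `M`. -/
def dualBases {n : ℕ} (𝓑 : Finset (Finset (Fin n))) : Finset (Finset (Fin n)) :=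
  𝓑.image (fun B => Finset.univ \ B)

/-- The weighted quasisymmetric enumerator `F_q(M) = F_q(P_M) = Σ_F q^{rk_{P_M}(F)} M_{type(F)}`
of a matroid, expanded in the monomial basis; its coefficient of `M_α` is the polynomial
`p_α(q) = Σ_{F : type(F) = α} q^{rk_{P_M}(F)}`. -/
noncomputable def FqMat (n : ℕ) (𝓑 : Finset (Finset (Fin n))) (q : ℚ) : QS :=
  ∑ C : Finset (Finset (Fin n)),
    (if IsFlag n C then q ^ (rkM 𝓑 C) • Mc (flagType C) else 0)


open Finset Matroid

/-! For a flag `∅ = F₀ ⊂ F₁ ⊂ ⋯ ⊂ F_{k+1} = [n]`, the complementary flag `F*` with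
`F*_j = [n] ∖ F_{k+1-j}` has the reverse type, and its minors in `M*` are the duals of the minors
of `F` in `M`: `(M*|F*_j)/F*_{j-1} = ((M|F_{k+2-j})/F_{k+1-j})*`. A matroid and its dual have the
same connected components, since an exchange `B₂ = B₁ - i + j` between bases of `N` is the
exchange `B₁ᶜ = B₂ᶜ - i + j` between bases of `N*`. So the rank statistic of `F` in `M` equals
that of `F*` in `M*`, and `F ↦ F*` matches the terms of `F_q(M*)` at `M_α` with those of `F_q(M)`
at `M_{rev(α)}`. -/

namespace Matroid

variable {α : Type*} {M : Matroid α} {B I X Y : Set α}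

lemma IsBasis.contract_isBase_iff (hI : M.IsBasis I X) :
    (M ／ X).IsBase B ↔ M.IsBase (B ∪ I) ∧ Disjoint B X := by
  simp_rw [isBase_iff_maximal_indep, maximal_subset_iff, hI.contract_indep_iff]
  constructor
  · rintro ⟨⟨hBI, hXB⟩, hmax⟩
    refine ⟨⟨hBI, fun J hJ hBIJ => hBIJ.antisymm fun e heJ => ?_⟩, hXB.symm⟩
    by_contra heBI
    have hins : M.Indep (insert e (B ∪ I)) := hJ.subset (Set.insert_subset heJ hBIJ)
    by_cases heX : e ∈ X
    · have := hI.insert_dep ⟨heX, fun h => heBI (Or.inr h)⟩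
      exact this.not_indep (hins.subset (Set.insert_subset_insert Set.subset_union_right))
    · have := hmax (t := insert e B) ⟨by simpa [Set.insert_union] using hins,
        Set.disjoint_insert_right.2 ⟨heX, hXB⟩⟩ (Set.subset_insert _ _)
      exact heBI (Or.inl (this ▸ Set.mem_insert e B))
  · rintro ⟨hBI, hBX⟩
    refine ⟨⟨hBI.1, hBX.symm⟩, fun J ⟨hJI, hXJ⟩ hBJ => hBJ.antisymm fun e heJ => ?_⟩
    have : e ∈ B ∪ I := (hBI.2 hJI (Set.union_subset_union_left _ hBJ)) ▸ Or.inl heJ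
    exact this.resolve_right fun heI => hXJ.notMem_of_mem_left (hI.subset heI) heJ

lemma dual_restrict_contract (hYX : Y ⊆ X) (hX : X ⊆ M.E) :
    (M✶ ↾ (M.E \ Y)) ／ (M.E \ X) = ((M ↾ X) ／ Y)✶ := by
  rw [restrict_contract_eq_contract_restrict _ hYX, ← dual_ground, ← delete_eq_restrict,
    ← dual_contract, ← dual_delete, delete_eq_restrict, contract_ground, dual_ground]
  congr 2
  ext e
  simp only [Set.mem_sdiff]
  have := @hX e
  tauto

end Matroid

lemma Relation.eqvGen_eq_of_forall_ne {α : Type*} {r s : α → α → Prop}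
    (h : ∀ a b, a ≠ b → (r a b ↔ s b a)) : Relation.EqvGen r = Relation.EqvGen s := by
  have hle : ∀ {r s : α → α → Prop}, (∀ a b, a ≠ b → r a b → s b a) →
      Relation.EqvGen r ≤ Relation.EqvGen s := fun hrs =>
    Relation.EqvGen.eqvGen_le fun a b hab => by
      rcases eq_or_ne a b with rfl | hne
      · exact .refl a
      · exact .symm _ _ (.rel _ _ (hrs a b hne hab))
  exact le_antisymm (hle fun a b hne => (h a b hne).1)
    (hle fun a b hne hab => (h b a hne.symm).2 hab)

lemma Set.ncard_image_quot_mk_congr {α : Type*} {r s : α → α → Prop}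
    (h : Relation.EqvGen r = Relation.EqvGen s) (T : Set α) :
    (Quot.mk r '' T).ncard = (Quot.mk s '' T).ncard := by
  let f : Quot r → Quot s :=
    Quot.lift (Quot.mk s) fun a b hab => Quot.eqvGen_sound (h ▸ .rel a b hab)
  have hf : f.Injective := by
    rintro ⟨a⟩ ⟨b⟩ hab
    exact Quot.eqvGen_sound (h ▸ Quot.eqvGen_exact hab)
  rw [← Set.ncard_image_of_injective _ hf, Set.image_image]

namespace Matroid

variable {n : ℕ} {N : Matroid (Fin n)} {𝓒 𝓒' : Finset (Finset (Fin n))} {A I S X Y : Finset (Fin n)}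

def HasBases (N : Matroid (Fin n)) (𝓒 : Finset (Finset (Fin n))) : Prop :=
  ∀ B : Finset (Fin n), B ∈ 𝓒 ↔ N.IsBase B

namespace HasBases

lemma mIndep_iff (h : N.HasBases 𝓒) : mIndep 𝓒 I ↔ N.Indep I := by
  rw [indep_iff]
  constructor
  · rintro ⟨B, hB, hIB⟩
    exact ⟨B, (h B).1 hB, by simpa using hIB⟩
  · rintro ⟨B, hB, hIB⟩
    obtain ⟨B, rfl⟩ := (Set.toFinite B).exists_finset_coe
    exact ⟨B, (h B).2 hB, by simpa using hIB⟩

lemma mem_basesRestrict_iff (h : N.HasBases 𝓒) (hA : (A : Set (Fin n)) ⊆ N.E) :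
    I ∈ basesRestrict 𝓒 A ↔ N.IsBasis I A := by
  simp only [basesRestrict, mem_filter, mem_powerset, isBasis_iff hA, h.mIndep_iff]
  constructor
  · rintro ⟨hIA, hI, hmax⟩
    refine ⟨hI, by simpa using hIA, fun J hJ hIJ hJA => ?_⟩
    obtain ⟨J, rfl⟩ := (Set.toFinite J).exists_finset_coe
    exact congrArg _ (hmax J (by simpa using hJA) hJ (by simpa using hIJ))
  · rintro ⟨hI, hIA, hmax⟩
    exact ⟨by simpa using hIA, hI, fun J hJA hJ hIJ =>
      Finset.coe_inj.1 (hmax J hJ (by simpa using hIJ) (by simpa using hJA))⟩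

lemma restrict (h : N.HasBases 𝓒) (hA : (A : Set (Fin n)) ⊆ N.E) :
    (N ↾ A).HasBases (basesRestrict 𝓒 A) := fun _ =>
  (h.mem_basesRestrict_iff hA).trans (isBase_restrict_iff hA).symm

lemma contract (h : N.HasBases 𝓒) (hA : (A : Set (Fin n)) ⊆ N.E) :
    (N ／ A).HasBases (basesContract 𝓒 A) := by
  intro I
  simp only [basesContract, mem_filter, mem_powerset, subset_univ, true_and]
  constructor
  · rintro ⟨hIA, BA, hBA, hIBA⟩
    refine ((h.mem_basesRestrict_iff hA).1 hBA).contract_isBase_iff.2 ⟨?_, disjoint_coe.2 hIA⟩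
    simpa using (h _).1 hIBA
  · intro hI
    obtain ⟨BA, hBA⟩ := N.exists_isBasis A hA
    obtain ⟨BA, rfl⟩ := (Set.toFinite BA).exists_finset_coe
    obtain ⟨hIBA, hIA⟩ := hBA.contract_isBase_iff.1 hI
    exact ⟨disjoint_coe.1 hIA, BA, (h.mem_basesRestrict_iff hA).2 hBA,
      (h _).2 (by simpa using hIBA)⟩

lemma eq (h : N.HasBases 𝓒) (h' : N.HasBases 𝓒') : 𝓒 = 𝓒' :=
  Finset.ext fun B => (h B).trans (h' B).symm

lemma subset_of_mem (h : N.HasBases 𝓒) (hS : N.E = S) {B : Finset (Fin n)} (hB : B ∈ 𝓒) :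
    B ⊆ S :=
  coe_subset.1 (hS ▸ ((h B).1 hB).subset_ground)

lemma dual (h : N.HasBases 𝓒) (hS : N.E = S) : N✶.HasBases (𝓒.image (S \ ·)) := by
  intro T
  rw [dual_isBase_iff', hS, mem_image]
  constructor
  · rintro ⟨B, hB, rfl⟩
    refine ⟨?_, by simp⟩
    rwa [← coe_sdiff, Finset.sdiff_sdiff_eq_self (h.subset_of_mem hS hB), ← h]
  · rintro ⟨hT, hTS⟩
    rw [← coe_sdiff, ← h] at hT
    exact ⟨S \ T, hT, Finset.sdiff_sdiff_eq_self (by simpa using hTS)⟩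

lemma exists_sized (h : N.HasBases 𝓒) : ∃ r, (𝓒 : Set (Finset (Fin n))).Sized r := by
  obtain ⟨B₀, hB₀⟩ := N.exists_isBase
  obtain ⟨B₀, rfl⟩ := (Set.toFinite B₀).exists_finset_coe
  exact ⟨B₀.card, fun B hB => by simpa using ((h B).1 hB).ncard_eq_ncard_of_isBase hB₀⟩

lemma minorBases {M : Matroid (Fin n)} {𝓑 : Finset (Finset (Fin n))} (h : M.HasBases 𝓑)
    (hE : M.E = Set.univ) (hYX : Y ⊆ X) :
    ((M ↾ X) ／ Y).HasBases (_root_.minorBases 𝓑 X Y) :=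
  (h.restrict (by simp [hE])).contract (by simpa using hYX)

end HasBases

end Matroid

lemma IsMatroid.exists_hasBases {n : ℕ} {𝓑 : Finset (Finset (Fin n))} (h𝓑 : IsMatroid n 𝓑) :
    ∃ M : Matroid (Fin n), M.E = Set.univ ∧ M.HasBases 𝓑 := by
  obtain ⟨⟨B₀, hB₀⟩, hexch⟩ := h𝓑
  refine ⟨Matroid.ofIsBaseOfFinite Set.finite_univ (fun B => ∃ B' ∈ 𝓑, (B' : Set (Fin n)) = B)
    ⟨_, B₀, hB₀, rfl⟩ ?_ (fun _ _ => Set.subset_univ _), rfl, fun B => ?_⟩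
  · rintro _ _ ⟨B₁, hB₁, rfl⟩ ⟨B₂, hB₂, rfl⟩ i hi
    obtain ⟨j, hj, hB⟩ := hexch B₁ hB₁ B₂ hB₂ i (by simpa using hi)
    exact ⟨j, by simpa using hj, _, hB, by simp [Finset.coe_erase]⟩
  · exact ⟨fun hB => ⟨B, hB, rfl⟩, fun ⟨B', hB', he⟩ => Finset.coe_inj.1 he ▸ hB'⟩

lemma minorBases_dualBases {n : ℕ} {M : Matroid (Fin n)} {𝓑 : Finset (Finset (Fin n))}
    (hM : M.HasBases 𝓑) (hE : M.E = Set.univ) {X Y : Finset (Fin n)} (hYX : Y ⊆ X) :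
    minorBases (dualBases 𝓑) (univ \ Y) (univ \ X) = (minorBases 𝓑 X Y).image ((X \ Y) \ ·) := by
  have hdual : ((M✶ ↾ ↑(univ \ Y)) ／ ↑(univ \ X)).HasBases
      (minorBases (dualBases 𝓑) (univ \ Y) (univ \ X)) :=
    (hM.dual (S := univ) (by simpa using hE)).minorBases hE (sdiff_subset_sdiff subset_rfl hYX)
  have hminor : (((M ↾ X) ／ Y)✶).HasBases ((minorBases 𝓑 X Y).image ((X \ Y) \ ·)) :=
    (hM.minorBases hE hYX).dual (by simp)
  have hdual_minor : (M✶ ↾ ↑(univ \ Y)) ／ ↑(univ \ X) = ((M ↾ X) ／ Y)✶ := by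
    simpa [hE] using M.dual_restrict_contract (coe_subset.2 hYX) (by simp [hE])
  exact hdual.eq (hdual_minor ▸ hminor)

section Components

variable {n r : ℕ} {𝓕 : Finset (Finset (Fin n))} {S : Finset (Fin n)} {i j : Fin n}

lemma mRel_iff_exists_sdiff_eq (h𝓕 : (𝓕 : Set (Finset (Fin n))).Sized r) (hij : i ≠ j) :
    mRel 𝓕 i j ↔ ∃ B₁ ∈ 𝓕, ∃ B₂ ∈ 𝓕, B₁ \ B₂ = {i} ∧ B₂ \ B₁ = {j} := by
  constructor
  · rintro ⟨B, hB, hiB, hB'⟩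
    have hjB : j ∉ B := by
      intro hjB
      have hcard := h𝓕 hB'
      rw [insert_eq_of_mem (mem_erase.2 ⟨hij.symm, hjB⟩), card_erase_of_mem hiB, h𝓕 hB] at hcard
      have : 0 < r := h𝓕 hB ▸ card_pos.2 ⟨i, hiB⟩
      omega
    refine ⟨B, hB, _, hB', ?_, ?_⟩ <;> ext x <;> simp <;> grind
  · rintro ⟨B₁, hB₁, B₂, hB₂, h₁, h₂⟩
    have h₁ := Finset.ext_iff.1 h₁
    have h₂ := Finset.ext_iff.1 h₂
    refine ⟨B₁, hB₁, (mem_sdiff.1 ((h₁ i).2 (mem_singleton_self i))).1, ?_⟩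
    convert hB₂ using 1
    ext x
    simp only [mem_sdiff, mem_singleton] at h₁ h₂
    simp only [mem_insert, mem_erase]
    grind

lemma sized_image_sdiff (hsub : ∀ B ∈ 𝓕, B ⊆ S) (h𝓕 : (𝓕 : Set (Finset (Fin n))).Sized r) :
    ((𝓕.image (S \ ·) : Finset (Finset (Fin n))) : Set (Finset (Fin n))).Sized (S.card - r) := by
  rintro _ hT
  obtain ⟨B, hB, rfl⟩ := mem_image.1 hT
  rw [card_sdiff_of_subset (hsub B hB), h𝓕 hB]

lemma mRel_image_sdiff_iff (hsub : ∀ B ∈ 𝓕, B ⊆ S) (h𝓕 : (𝓕 : Set (Finset (Fin n))).Sized r)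
    (hij : i ≠ j) : mRel (𝓕.image (S \ ·)) i j ↔ mRel 𝓕 j i := by
  rw [mRel_iff_exists_sdiff_eq (sized_image_sdiff hsub h𝓕) hij,
    mRel_iff_exists_sdiff_eq h𝓕 hij.symm]
  simp only [exists_mem_image]
  refine exists_congr fun B₁ => and_congr_right fun hB₁ =>
    exists_congr fun B₂ => and_congr_right fun hB₂ => ?_
  rw [sdiff_sdiff_sdiff_cancel_left (hsub _ hB₁), sdiff_sdiff_sdiff_cancel_left (hsub _ hB₂),
    and_comm]

lemma cOn_image_sdiff (hsub : ∀ B ∈ 𝓕, B ⊆ S) (h𝓕 : (𝓕 : Set (Finset (Fin n))).Sized r) :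
    cOn S (𝓕.image (S \ ·)) = cOn S 𝓕 :=
  Set.ncard_image_quot_mk_congr
    (Relation.eqvGen_eq_of_forall_ne fun _ _ hij => mRel_image_sdiff_iff hsub h𝓕 hij) _

end Components

noncomputable def minorRk {n : ℕ} (𝓑 : Finset (Finset (Fin n))) (X Y : Finset (Fin n)) : ℕ :=
  X.card - Y.card - cOn (X \ Y) (minorBases 𝓑 X Y)

lemma card_compl_sub_card_compl {α : Type*} [Fintype α] [DecidableEq α]
    {X Y : Finset α} (hYX : Y ⊆ X) : Yᶜ.card - Xᶜ.card = X.card - Y.card := by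
  rw [card_compl, card_compl]
  have := card_le_card hYX
  have := card_le_univ X
  omega

lemma minorRk_dualBases {n : ℕ} {M : Matroid (Fin n)} {𝓑 : Finset (Finset (Fin n))}
    (hM : M.HasBases 𝓑) (hE : M.E = Set.univ) {X Y : Finset (Fin n)} (hYX : Y ⊆ X) :
    minorRk (dualBases 𝓑) Yᶜ Xᶜ = minorRk 𝓑 X Y := by
  have hminor := hM.minorBases hE hYX
  have hground : ((M ↾ ↑X) ／ ↑Y).E = ↑(X \ Y) := by simp
  obtain ⟨r, hr⟩ := hminor.exists_sized
  rw [minorRk, minorRk, card_compl_sub_card_compl hYX, compl_eq_univ_sdiff, compl_eq_univ_sdiff,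
    minorBases_dualBases hM hE hYX,
    sdiff_sdiff_sdiff_cancel_left (subset_univ X),
    cOn_image_sdiff (fun _ => hminor.subset_of_mem hground) hr]

section ComplFlag

variable {n : ℕ} (C : Finset (Finset (Fin n)))

def complFlag : Finset (Finset (Fin n)) := C.image compl

lemma complFlag_involutive : Function.Involutive (complFlag (n := n)) := fun C => by
  simp [complFlag]

lemma card_complFlag : (complFlag C).card = C.card :=
  card_image_of_injective C compl_injective

variable {C} in
lemma isFlag_complFlag (h : IsFlag n C) : IsFlag n (complFlag C) := by
  obtain ⟨hproper, hchain⟩ := h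
  simp only [IsFlag, complFlag, forall_mem_image]
  refine ⟨fun A hA => ?_, fun A hA B hB => (hchain B hB A hA).imp compl_subset_compl.2
    compl_subset_compl.2⟩
  simpa [and_comm, nonempty_iff_ne_empty] using hproper A hA

lemma isFlag_complFlag_iff : IsFlag n (complFlag C) ↔ IsFlag n C :=
  ⟨fun h => complFlag_involutive C ▸ isFlag_complFlag h, isFlag_complFlag⟩

lemma lv_complFlag (p : Fin n) : lv (complFlag C) p = C.card - lv C p := by
  rw [lv, lv, complFlag, filter_image, card_image_of_injective _ compl_injective,
    ← card_filter_add_card_filter_not (s := C) (p := fun A => p ∉ A)]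
  simp

lemma fullChain_complFlag {j : ℕ} (hj : j ≤ C.card + 1) :
    fullChain (complFlag C) j = (fullChain C (C.card + 1 - j))ᶜ := by
  ext p
  have : lv C p ≤ C.card := card_filter_le _ _
  simp only [fullChain, lv_complFlag, mem_compl, mem_filter, mem_univ, true_and]
  omega

lemma fullChain_mono_s19 {j j' : ℕ} (h : j ≤ j') : fullChain C j ⊆ fullChain C j' :=
  monotone_filter_right _ fun _ _ hp => lt_of_lt_of_le hp h

end ComplFlag

lemma flagType_complFlag {n : ℕ} (C : Finset (Finset (Fin n))) :
    flagType (complFlag C) = (flagType C).reverse := by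
  refine List.ext_getElem (by simp [flagType, card_complFlag]) fun i hi _ => ?_
  simp only [flagType, card_complFlag, List.length_map, List.length_range] at hi ⊢
  rw [List.getElem_reverse]
  simp only [List.getElem_map, List.getElem_range, List.length_map, List.length_range]
  rw [fullChain_complFlag C (by omega), fullChain_complFlag C (by omega),
    card_compl_sub_card_compl (fullChain_mono_s19 C (by omega))]
  congr 3 <;> omega

lemma rkM_eq_sum_minorRk {n : ℕ} (𝓑 C : Finset (Finset (Fin n))) :
    rkM 𝓑 C = ∑ j ∈ range (C.card + 1), minorRk 𝓑 (fullChain C (j + 1)) (fullChain C j) :=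
  rfl

lemma rkM_dualBases_complFlag {n : ℕ} {M : Matroid (Fin n)} {𝓑 : Finset (Finset (Fin n))}
    (hM : M.HasBases 𝓑) (hE : M.E = Set.univ) (C : Finset (Finset (Fin n))) :
    rkM (dualBases 𝓑) (complFlag C) = rkM 𝓑 C := by
  rw [rkM_eq_sum_minorRk, rkM_eq_sum_minorRk, card_complFlag, ← sum_range_reflect]
  refine sum_congr rfl fun j hj => ?_
  rw [mem_range] at hj
  rw [fullChain_complFlag C (by omega), fullChain_complFlag C (by omega),
    minorRk_dualBases hM hE (fullChain_mono_s19 C (by omega))]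
  congr 2 <;> omega

theorem FqMat_dual_reverse_general (n : ℕ)
    (𝓑 : Finset (Finset (Fin n))) (h𝓑 : IsMatroid n 𝓑) (q : ℚ) (α : List ℕ) :
    FqMat n (dualBases 𝓑) q α = FqMat n 𝓑 q α.reverse := by
  obtain ⟨M, hE, hM⟩ := h𝓑.exists_hasBases
  rw [FqMat, FqMat, Finsupp.finsetSum_apply, Finsupp.finsetSum_apply]
  refine (Fintype.sum_bijective _ (complFlag_involutive (n := n)).bijective _ _ fun C => ?_).symm
  rw [isFlag_complFlag_iff, rkM_dualBases_complFlag hM hE, flagType_complFlag]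
  split_ifs
  · simp [Mc, Finsupp.single_apply, eq_comm (a := flagType C), List.reverse_eq_iff]
  · rfl

/-- Let `M` be a matroid on `[n]` with dual `M*`.  Writing
`F_q(M) = Σ_{α ⊨ n} p_α(q) M_α` in the monomial basis, one has
`F_q(M*) = Σ_{α ⊨ n} p_α(q) M_{rev(α)}`; i.e. the coefficient of `M_α` in `F_q(M*)` equals the
coefficient of `M_{rev(α)}` in `F_q(M)`. -/
theorem FqMat_dual_reverse (n : ℕ) (hn : 0 < n)
    (𝓑 : Finset (Finset (Fin n))) (h𝓑 : IsMatroid n 𝓑) (q : ℚ) (α : List ℕ) :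
    FqMat n (dualBases 𝓑) q α = FqMat n 𝓑 q α.reverse :=
  FqMat_dual_reverse_general n 𝓑 h𝓑 q α
end
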